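/- arXiv:0711.1313 — 4 statements merged into one kernel-verified Lean document; each statement's English description precedes it below -/
import Mathlib

section
/- Let f be β-Hölder continuous on [0,T] with 0 < β ≤ 1, let γ ≥ 0, α real with α + β > 0 and α + β ≤ 1, and 0 ≤ a < b < v ≤ T. Then |∫_a^b s^γ (v-s)^α df(s)| ≤ ‖f‖_β (2 + |α/(α+β)|) b^γ ((v-b)^{α+β} + (v-a)^{α+β}), where the integral is a Riemann–Stieltjes integral and ‖f‖_β = sup_{0≤s<t≤T} |f(t)-f(s)|/(t-s)^β. -/
/-!
Write `φ s = s ^ γ * (v - s) ^ α`. Summation by parts against `f - f b`, which vanishes at `b`,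
turns a Riemann–Stieltjes sum into the boundary term `-φ a (f a - f b)` plus
`∑ (φ tⱼ - φ tⱼ₊₁) (f tⱼ₊₁ - f b)`, and Hölder continuity bounds `|f tⱼ₊₁ - f b|` by
`K (b - tⱼ₊₁) ^ β`. Weighted by this factor, the increments of `φ` are dominated by those of
`s ^ γ (v - a) ^ (α + β)` and of `-b ^ γ |α| / (α + β) (v - s) ^ (α + β)`; for the second one
compare `x ^ α - y ^ α = α ∫_y^x s ^ (α - 1)` with `x ^ (α + β) - y ^ (α + β)` using `y ^ β ≤ s ^ β`.
The sums telescope, so every Riemann–Stieltjes sum, and hence the integral, is at most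
`K (2 + |α| / (α + β)) b ^ γ (v - a) ^ (α + β)`.
-/

/-- `I` is the Riemann–Stieltjes integral `∫_a^b φ(s) df(s)`: the Riemann–Stieltjes sums
over tagged partitions of `[a,b]` converge to `I` as the mesh tends to `0`. -/
def RSIntegral (φ f : ℝ → ℝ) (a b I : ℝ) : Prop :=
  ∀ ε > (0:ℝ), ∃ δ > (0:ℝ), ∀ (n : ℕ) (t τ : ℕ → ℝ),
    0 < n → t 0 = a → t n = b →
    (∀ i < n, t i < t (i + 1)) →
    (∀ i < n, t (i + 1) - t i ≤ δ) →
    (∀ i < n, t i ≤ τ i ∧ τ i ≤ t (i + 1)) →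
    |(∑ i ∈ Finset.range n, φ (τ i) * (f (t (i + 1)) - f (t i))) - I| ≤ ε

open Finset Real

lemma sum_range_succ_mul_sub_eq {R : Type*} [CommRing R] (p g : ℕ → R) (m : ℕ) :
    ∑ i ∈ range (m + 1), p i * (g (i + 1) - g i)
      = p m * g (m + 1) - p 0 * g 0 + ∑ j ∈ range m, (p j - p (j + 1)) * g (j + 1) := by
  induction m with
  | zero => simp [mul_sub]
  | succ m ih => rw [sum_range_succ, ih, sum_range_succ]; ring

lemma abs_rpow_sub_rpow_mul_rpow_le {α β x y : ℝ} (hβ : 0 ≤ β) (hαβ : 0 < α + β)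
    (hy : 0 < y) (hyx : y ≤ x) :
    |x ^ α - y ^ α| * y ^ β ≤ |α| / (α + β) * (x ^ (α + β) - y ^ (α + β)) := by
  rcases eq_or_ne α 0 with rfl | hα
  · simp
  have h0 : (0 : ℝ) ∉ Set.uIcc y x := by
    rw [Set.uIcc_of_le hyx]; exact fun h => hy.not_ge h.1
  have hα' : ∫ s in y..x, s ^ (α - 1) = (x ^ α - y ^ α) / α := by
    rw [integral_rpow (Or.inr ⟨by contrapose! hα; linarith, h0⟩), sub_add_cancel]
  have hαβ' : ∫ s in y..x, s ^ (α + β - 1) = (x ^ (α + β) - y ^ (α + β)) / (α + β) := by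
    rw [integral_rpow (Or.inl (by linarith)), sub_add_cancel]
  have hmono : (∫ s in y..x, s ^ (α - 1)) * y ^ β ≤ ∫ s in y..x, s ^ (α + β - 1) := by
    rw [← intervalIntegral.integral_mul_const]
    refine intervalIntegral.integral_mono_on hyx
      ((intervalIntegral.intervalIntegrable_rpow (Or.inr h0)).mul_const _)
      (intervalIntegral.intervalIntegrable_rpow (Or.inr h0)) fun s hs => ?_
    have hs0 : 0 < s := hy.trans_le hs.1
    calc s ^ (α - 1) * y ^ β ≤ s ^ (α - 1) * s ^ β := by gcongr; exact hs.1
      _ = s ^ (α + β - 1) := by rw [← rpow_add hs0]; congr 1; ring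
  have hnonneg : 0 ≤ ∫ s in y..x, s ^ (α - 1) :=
    intervalIntegral.integral_nonneg hyx fun s hs => rpow_nonneg (hy.le.trans hs.1) _
  have hdiff : x ^ α - y ^ α = α * ∫ s in y..x, s ^ (α - 1) := by
    rw [hα']; field_simp
  calc |x ^ α - y ^ α| * y ^ β = |α| * ((∫ s in y..x, s ^ (α - 1)) * y ^ β) := by
        rw [hdiff, abs_mul, abs_of_nonneg hnonneg, mul_assoc]
    _ ≤ |α| * ∫ s in y..x, s ^ (α + β - 1) := by gcongr
    _ = |α| / (α + β) * (x ^ (α + β) - y ^ (α + β)) := by rw [hαβ']; ring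

lemma abs_sub_mul_rpow_le {α β γ a b v s s' : ℝ} (hβ : 0 ≤ β) (hγ : 0 ≤ γ)
    (hαβ : 0 < α + β) (ha : 0 ≤ a) (has : a ≤ s) (hss' : s ≤ s') (hs'b : s' ≤ b) (hbv : b < v) :
    |s ^ γ * (v - s) ^ α - s' ^ γ * (v - s') ^ α| * (b - s') ^ β ≤
      (s' ^ γ - s ^ γ) * (v - a) ^ (α + β)
        + b ^ γ * (|α| / (α + β) * ((v - s) ^ (α + β) - (v - s') ^ (α + β))) := by
  have hs : 0 ≤ s := ha.trans has
  have hvs' : 0 < v - s' := by linarith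
  have hvs : 0 < v - s := by linarith
  have hγ_mono : s ^ γ ≤ s' ^ γ := by gcongr
  have hsplit : |s ^ γ * (v - s) ^ α - s' ^ γ * (v - s') ^ α|
      ≤ (s' ^ γ - s ^ γ) * (v - s) ^ α + s' ^ γ * |(v - s) ^ α - (v - s') ^ α| := by
    calc _ = |-((s' ^ γ - s ^ γ) * (v - s) ^ α) + s' ^ γ * ((v - s) ^ α - (v - s') ^ α)| := by
          congr 1; ring
      _ ≤ _ := by
          refine (abs_add_le _ _).trans_eq ?_
          rw [abs_neg, abs_mul, abs_mul, abs_of_nonneg (sub_nonneg.2 hγ_mono),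
            abs_of_nonneg (rpow_nonneg (by linarith) _), abs_of_nonneg (rpow_nonneg (by linarith) _)]
  have hfirst : (v - s) ^ α * (b - s') ^ β ≤ (v - a) ^ (α + β) :=
    calc (v - s) ^ α * (b - s') ^ β ≤ (v - s) ^ α * (v - s) ^ β := by
          have := rpow_nonneg hvs.le α
          gcongr
      _ = (v - s) ^ (α + β) := (rpow_add (by linarith) _ _).symm
      _ ≤ (v - a) ^ (α + β) := by gcongr
  have hsecond : |(v - s) ^ α - (v - s') ^ α| * (b - s') ^ β
      ≤ |α| / (α + β) * ((v - s) ^ (α + β) - (v - s') ^ (α + β)) :=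
    calc _ ≤ |(v - s) ^ α - (v - s') ^ α| * (v - s') ^ β := by gcongr
      _ ≤ _ := abs_rpow_sub_rpow_mul_rpow_le hβ hαβ hvs' (by linarith)
  calc _ ≤ ((s' ^ γ - s ^ γ) * (v - s) ^ α + s' ^ γ * |(v - s) ^ α - (v - s') ^ α|)
          * (b - s') ^ β := by gcongr
    _ = (s' ^ γ - s ^ γ) * ((v - s) ^ α * (b - s') ^ β)
          + s' ^ γ * (|(v - s) ^ α - (v - s') ^ α| * (b - s') ^ β) := by ring
    _ ≤ _ := by
      have hsecond_nonneg : 0 ≤ |α| / (α + β) * ((v - s) ^ (α + β) - (v - s') ^ (α + β)) :=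
        mul_nonneg (by positivity) (sub_nonneg.2 (by gcongr))
      have := rpow_nonneg (hs.trans (hss'.trans hs'b)) γ
      gcongr
      linarith

lemma sum_abs_sub_mul_rpow_le {α β γ a b v : ℝ} {t : ℕ → ℝ} (m : ℕ)
    (hβ : 0 ≤ β) (hγ : 0 ≤ γ) (hαβ : 0 < α + β) (ha : 0 ≤ a) (hbv : b < v)
    (ht : Monotone t) (ht0 : t 0 = a) (htm : t m ≤ b) :
    ∑ j ∈ range m, |t j ^ γ * (v - t j) ^ α - t (j + 1) ^ γ * (v - t (j + 1)) ^ α|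
        * (b - t (j + 1)) ^ β
      ≤ (1 + |α| / (α + β)) * b ^ γ * (v - a) ^ (α + β) := by
  have hmem : ∀ j ≤ m, t j ∈ Set.Icc a b := fun j hj => ⟨ht0 ▸ ht j.zero_le, (ht hj).trans htm⟩
  have hab : a ≤ b := ht0 ▸ htm.trans' (ht m.zero_le)
  calc _ ≤ ∑ j ∈ range m, ((t (j + 1) ^ γ - t j ^ γ) * (v - a) ^ (α + β)
        + b ^ γ * (|α| / (α + β) * ((v - t j) ^ (α + β) - (v - t (j + 1)) ^ (α + β)))) := by
        refine sum_le_sum fun j hj => ?_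
        have hj : j + 1 ≤ m := mem_range.1 hj
        exact abs_sub_mul_rpow_le hβ hγ hαβ ha (hmem j (by omega)).1 (ht j.le_succ)
          (hmem _ hj).2 hbv
    _ = (t m ^ γ - a ^ γ) * (v - a) ^ (α + β)
        + b ^ γ * (|α| / (α + β) * ((v - a) ^ (α + β) - (v - t m) ^ (α + β))) := by
        rw [sum_add_distrib, ← sum_mul, ← mul_sum, ← mul_sum, sum_range_sub (fun j => t j ^ γ),
          sum_range_sub' (fun j => (v - t j) ^ (α + β)), ht0]
    _ ≤ b ^ γ * (v - a) ^ (α + β) + b ^ γ * (|α| / (α + β) * (v - a) ^ (α + β)) := by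
        have : 0 ≤ (v - t m) ^ (α + β) := rpow_nonneg (by linarith) _
        have : t m ^ γ ≤ b ^ γ := by gcongr; exact ha.trans (hmem m le_rfl).1
        have : 0 ≤ a ^ γ := by positivity
        have : 0 ≤ b ^ γ := rpow_nonneg (ha.trans hab) γ
        have : 0 ≤ (v - a) ^ (α + β) := rpow_nonneg (by linarith) _
        gcongr <;> linarith
    _ = _ := by ring

lemma abs_sum_rpow_mul_sub_le {α β γ a b v K : ℝ} {f : ℝ → ℝ} {t : ℕ → ℝ} (m : ℕ)
    (hβ : 0 ≤ β) (hγ : 0 ≤ γ) (hαβ : 0 < α + β) (ha : 0 ≤ a) (hbv : b < v) (hK : 0 ≤ K)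
    (hf : ∀ x ∈ Set.Icc a b, |f x - f b| ≤ K * (b - x) ^ β)
    (ht : Monotone t) (ht0 : t 0 = a) (htb : t (m + 1) = b) :
    |∑ i ∈ range (m + 1), t i ^ γ * (v - t i) ^ α * (f (t (i + 1)) - f (t i))|
      ≤ K * (2 + |α| / (α + β)) * b ^ γ * (v - a) ^ (α + β) := by
  have hmem : ∀ i ≤ m + 1, t i ∈ Set.Icc a b := fun i hi =>
    ⟨ht0 ▸ ht i.zero_le, htb ▸ ht hi⟩
  have hab : a ≤ b := ht0 ▸ htb ▸ ht (m + 1).zero_le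
  set p : ℕ → ℝ := fun i => t i ^ γ * (v - t i) ^ α
  have hparts : ∑ i ∈ range (m + 1), p i * (f (t (i + 1)) - f (t i))
      = -(p 0 * (f a - f b)) + ∑ j ∈ range m, (p j - p (j + 1)) * (f (t (j + 1)) - f b) := by
    have h := sum_range_succ_mul_sub_eq p (fun i => f (t i) - f b) m
    simp only [htb, ht0, sub_self, mul_zero, zero_sub, sub_sub_sub_cancel_right] at h
    exact h
  have hboundary : |p 0 * (f a - f b)| ≤ K * b ^ γ * (v - a) ^ (α + β) := by
    have hva : 0 < v - a := by linarith
    have hvaα := rpow_nonneg hva.le α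
    calc |p 0 * (f a - f b)| = a ^ γ * (v - a) ^ α * |f a - f b| := by
          rw [abs_mul, show p 0 = a ^ γ * (v - a) ^ α by simp only [p, ht0],
            abs_of_nonneg (by positivity)]
      _ ≤ b ^ γ * (v - a) ^ α * (K * (v - a) ^ β) := by
          have := rpow_nonneg (ha.trans hab) γ
          gcongr
          exact (hf a ⟨le_rfl, hab⟩).trans (by gcongr)
      _ = K * b ^ γ * (v - a) ^ (α + β) := by rw [rpow_add hva]; ring
  have hterms : ∑ j ∈ range m, |(p j - p (j + 1)) * (f (t (j + 1)) - f b)|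
      ≤ K * ((1 + |α| / (α + β)) * b ^ γ * (v - a) ^ (α + β)) := by
    refine le_trans ?_ (mul_le_mul_of_nonneg_left
      (sum_abs_sub_mul_rpow_le m hβ hγ hαβ ha hbv ht ht0 (hmem m m.le_succ).2) hK)
    rw [mul_sum]
    refine sum_le_sum fun j hj => ?_
    rw [abs_mul, mul_left_comm]
    gcongr
    exact hf _ (hmem _ (by simp at hj; omega))
  rw [hparts]
  calc _ ≤ |p 0 * (f a - f b)| + ∑ j ∈ range m, |(p j - p (j + 1)) * (f (t (j + 1)) - f b)| := by
        refine (abs_add_le _ _).trans ?_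
        rw [abs_neg]
        gcongr
        exact abs_sum_le_sum_abs _ _
    _ ≤ _ := (add_le_add hboundary hterms).trans_eq (by ring)

lemma abs_le_of_rsIntegral {φ f : ℝ → ℝ} {a b I B : ℝ} (hab : a < b)
    (hI : RSIntegral φ f a b I)
    (hS : ∀ (m : ℕ) (t : ℕ → ℝ), Monotone t → t 0 = a → t (m + 1) = b →
      |∑ i ∈ range (m + 1), φ (t i) * (f (t (i + 1)) - f (t i))| ≤ B) :
    |I| ≤ B := by
  refine le_of_forall_pos_le_add fun ε hε => ?_
  obtain ⟨δ, hδ, hconv⟩ := hI ε hε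
  obtain ⟨m, hm⟩ := exists_nat_gt ((b - a) / δ)
  set c := (b - a) / (m + 1)
  have hc : 0 < c := div_pos (by linarith) (by positivity)
  have hcδ : c ≤ δ := by
    rw [div_le_iff₀ (by positivity)]
    rw [div_lt_iff₀ hδ] at hm
    nlinarith
  let t : ℕ → ℝ := fun i => a + i * c
  have ht : Monotone t := fun i j hij => by
    simp only [t]; gcongr
  have hstep : ∀ i, t (i + 1) - t i = c := fun i => by
    simp only [t]; push_cast; ring
  have htb : t (m + 1) = b := by
    simp only [t, c]; push_cast; field_simp; ring
  have hsum := hconv (m + 1) t t m.succ_pos (by simp [t]) htb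
    (fun i _ => by linarith [hstep i]) (fun i _ => by linarith [hstep i])
    (fun i _ => ⟨le_rfl, ht i.le_succ⟩)
  have hSB := hS m t ht (by simp [t]) htb
  linarith [abs_sub_abs_le_abs_sub I (∑ i ∈ range (m + 1), φ (t i) * (f (t (i + 1)) - f (t i))),
    abs_sub_comm I (∑ i ∈ range (m + 1), φ (t i) * (f (t (i + 1)) - f (t i)))]

theorem stmt4_general (T β γ α a b v K I : ℝ) (f : ℝ → ℝ)
    (hβ : 0 < β) (hγ : 0 ≤ γ)
    (hαβ : 0 < α + β)
    (ha : 0 ≤ a) (hab : a < b) (hbv : b < v) (hvT : v ≤ T)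
    (hK : 0 ≤ K)
    (hf : ∀ x ∈ Set.Icc (0:ℝ) T, ∀ y ∈ Set.Icc (0:ℝ) T, |f x - f y| ≤ K * |x - y| ^ β)
    (hI : RSIntegral (fun s => s ^ γ * (v - s) ^ α) f a b I) :
    |I| ≤ K * (2 + |α / (α + β)|) * b ^ γ * ((v - b) ^ (α + β) + (v - a) ^ (α + β)) := by
  have hf_b : ∀ x ∈ Set.Icc a b, |f x - f b| ≤ K * (b - x) ^ β := fun x hx => by
    simpa [abs_of_nonpos (sub_nonpos.2 hx.2)] using
      hf x ⟨ha.trans hx.1, by linarith [hx.2]⟩ b ⟨by linarith, by linarith⟩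
  refine (abs_le_of_rsIntegral hab hI fun m t ht ht0 htb =>
    abs_sum_rpow_mul_sub_le m hβ.le hγ hαβ ha hbv hK hf_b ht ht0 htb).trans ?_
  rw [abs_div, abs_of_pos hαβ]
  have : 0 ≤ (v - b) ^ (α + β) := rpow_nonneg (by linarith) _
  have : 0 ≤ b ^ γ := rpow_nonneg (by linarith) _
  gcongr
  linarith

/-- Lemma A.4 of the paper: bound for `|∫_a^b s^γ (v-s)^α df(s)|` when `f` is
`β`-Hölder continuous on `[0,T]` with constant `K`. -/
theorem stmt4 (T β γ α a b v K I : ℝ) (f : ℝ → ℝ)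
    (hβ : 0 < β) (hβ1 : β ≤ 1) (hγ : 0 ≤ γ)
    (hαβ : 0 < α + β) (hαβ1 : α + β ≤ 1)
    (ha : 0 ≤ a) (hab : a < b) (hbv : b < v) (hvT : v ≤ T)
    (hK : 0 ≤ K)
    (hf : ∀ x ∈ Set.Icc (0:ℝ) T, ∀ y ∈ Set.Icc (0:ℝ) T, |f x - f y| ≤ K * |x - y| ^ β)
    (hI : RSIntegral (fun s => s ^ γ * (v - s) ^ α) f a b I) :
    |I| ≤ K * (2 + |α / (α + β)|) * b ^ γ * ((v - b) ^ (α + β) + (v - a) ^ (α + β)) :=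
  stmt4_general T β γ α a b v K I f hβ hγ hαβ ha hab hbv hvT hK hf hI
end

section
/- Let f ∈ C^β([0,T]) with 0 < β ≤ 1, and let α < 0 with α + β > 0. Define g(t) = ∫₀^t s^α df(s) (Riemann–Stieltjes integral). Then g is (α+β)-Hölder continuous on [0,T] with ‖g‖_{α+β} ≤ (β/(α+β)) ‖f‖_β. -/
/-!
Write `a = t₀ < ⋯ < tₙ = b` for a partition and `hᵢ = f(tᵢ) - f(y)` for a base point
`0 ≤ y ≤ a`. Summation by parts turns the right-endpoint sum `∑ tᵢ₊₁^α (hᵢ₊₁ - hᵢ)` into the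
boundary terms `tₙ^α hₙ - t₀^α h₀` plus `∑ (tᵢ^α - tᵢ₊₁^α) hᵢ`. Since `|hᵢ| ≤ K (tᵢ - y)^β`, each
summand is at most `K` times the increment of `-α/(α+β) · (t - y)^(α+β)` over `[tᵢ, tᵢ₊₁]`, so
the sum telescopes and every such Riemann–Stieltjes sum is bounded by
`β/(α+β) K (b - y)^(α+β) + K (a - y)^(α+β)`. For `0 < y < x`, `G c x - G c y` is a limit of such
sums on `[y, x]`, where the second term vanishes; for `y = 0`, `G c x` is one on `[c, x]`, and the
second term `K c^(α+β)` disappears as `c → 0`.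
-/

open Set Filter Finset Real Topology

lemma rpow_mul_rpow_le_rpow_add {u v α β : ℝ} (hα : α ≤ 0) (hαβ : 0 < α + β)
    (hu : 0 ≤ u) (huv : u ≤ v) : v ^ α * u ^ β ≤ u ^ (α + β) := by
  rcases hu.eq_or_lt with rfl | hu
  · simp [zero_rpow (by linarith : β ≠ 0), zero_rpow hαβ.ne']
  · rw [rpow_add hu]
    exact mul_le_mul_of_nonneg_right (rpow_le_rpow_of_nonpos hu huv hα) (rpow_nonneg hu.le _)

-- The discrete counterpart of `∫ₐᵇ (-α) s^(α-1) (s-y)^β ds ≤ ∫ₐᵇ (-α) (s-y)^(α+β-1) ds`.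
lemma rpow_sub_rpow_mul_rpow_le {α β y a b : ℝ} (hα : α ≤ 0) (hαβ : 0 < α + β)
    (hy : 0 ≤ y) (hya : y ≤ a) (ha : 0 < a) (hab : a ≤ b) :
    (a ^ α - b ^ α) * (a - y) ^ β ≤ -α / (α + β) * ((b - y) ^ (α + β) - (a - y) ^ (α + β)) := by
  have hβ : 0 ≤ β := by linarith
  have hmono : MonotoneOn (fun s => -α / (α + β) * (s - y) ^ (α + β) + (a - y) ^ β * s ^ α)
      (Ici a) := by
    refine monotoneOn_of_hasDerivWithinAt_nonneg (convex_Ici a) ?_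
      (f' := fun s => -α * (s - y) ^ (α + β - 1) + (a - y) ^ β * (α * s ^ (α - 1)))
      (fun s hs => ?_) (fun s hs => ?_)
    · refine ContinuousOn.add (ContinuousOn.mul continuousOn_const ?_)
        (ContinuousOn.mul continuousOn_const ?_)
      · exact ContinuousOn.rpow_const (by fun_prop) fun _ _ => Or.inr hαβ.le
      · exact ContinuousOn.rpow_const continuousOn_id fun s hs => Or.inl (ha.trans_le hs).ne'
    · rw [interior_Ici] at hs
      have hsy : 0 < s - y := by linarith [mem_Ioi.1 hs]
      refine HasDerivAt.hasDerivWithinAt ?_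
      have h1 := ((hasDerivAt_id' s).sub_const y).rpow_const (p := α + β) (Or.inl hsy.ne')
      have h2 := hasDerivAt_rpow_const (p := α) (Or.inl (ha.trans hs).ne')
      refine ((h1.const_mul (-α / (α + β))).add (h2.const_mul ((a - y) ^ β))).congr_deriv ?_
      field_simp
    · rw [interior_Ici] at hs
      have hs : a < s := hs
      have hsy : 0 < s - y := by linarith
      have hβmono : (a - y) ^ β ≤ (s - y) ^ β := rpow_le_rpow (by linarith) (by linarith) hβ
      have hαmono : s ^ (α - 1) ≤ (s - y) ^ (α - 1) :=
        rpow_le_rpow_of_nonpos hsy (by linarith) (by linarith)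
      have hsplit : (s - y) ^ (α + β - 1) = (s - y) ^ (α - 1) * (s - y) ^ β := by
        rw [← rpow_add hsy]; ring_nf
      have : (a - y) ^ β * s ^ (α - 1) ≤ (s - y) ^ (α + β - 1) := by
        rw [hsplit, mul_comm]
        exact mul_le_mul hαmono hβmono (rpow_nonneg (by linarith) _) (rpow_nonneg hsy.le _)
      linarith [mul_le_mul_of_nonneg_left this (neg_nonneg.2 hα)]
  have hab' : -α / (α + β) * (a - y) ^ (α + β) + (a - y) ^ β * a ^ α
      ≤ -α / (α + β) * (b - y) ^ (α + β) + (a - y) ^ β * b ^ α := hmono self_mem_Ici hab hab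
  have ha' : a ^ α * (a - y) ^ β ≤ (a - y) ^ (α + β) :=
    rpow_mul_rpow_le_rpow_add hα hαβ (by linarith) (by linarith)
  linarith

lemma sum_range_mul_sub_by_parts (a h : ℕ → ℝ) (n : ℕ) :
    ∑ i ∈ range n, a (i + 1) * (h (i + 1) - h i)
      = a n * h n - a 0 * h 0 + ∑ i ∈ range n, (a i - a (i + 1)) * h i := by
  induction n with
  | zero => simp
  | succ n ih => rw [sum_range_succ, sum_range_succ, ih]; ring

def IsPartition (a b : ℝ) (n : ℕ) (t : ℕ → ℝ) : Prop :=
  t 0 = a ∧ t n = b ∧ ∀ i < n, t i < t (i + 1)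

lemma IsPartition.monotoneOn {a b : ℝ} {n : ℕ} {t : ℕ → ℝ} (ht : IsPartition a b n t) :
    MonotoneOn t (Set.Iic n) :=
  (strictMonoOn_Iic_of_lt_succ fun i hi => by
    rw [Order.succ_eq_add_one]; exact ht.2.2 i hi).monotoneOn

lemma IsPartition.mem_Icc {a b : ℝ} {n : ℕ} {t : ℕ → ℝ} (ht : IsPartition a b n t) {i : ℕ}
    (hi : i ≤ n) : t i ∈ Icc a b := by
  rw [← ht.1, ← ht.2.1]
  exact ⟨ht.monotoneOn (Nat.zero_le _) hi (Nat.zero_le _),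
    ht.monotoneOn hi (Set.mem_Iic.2 le_rfl) hi⟩

lemma abs_sum_rpow_mul_sub_le_s5 {α β K y a b : ℝ} {n : ℕ} {t h : ℕ → ℝ} (hα : α ≤ 0)
    (hαβ : 0 < α + β) (hK : 0 ≤ K) (ht : IsPartition a b n t) (hy : 0 ≤ y) (hya : y ≤ a)
    (ha : 0 < a) (hh : ∀ i ≤ n, |h i| ≤ K * (t i - y) ^ β) :
    |∑ i ∈ range n, t (i + 1) ^ α * (h (i + 1) - h i)|
      ≤ β / (α + β) * K * (b - y) ^ (α + β) + K * (a - y) ^ (α + β) := by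
  set F : ℕ → ℝ := fun i => (t i - y) ^ (α + β)
  have hyt : ∀ i ≤ n, y ≤ t i := fun i hi => hya.trans (ht.mem_Icc hi).1
  have htpos : ∀ i ≤ n, 0 < t i := fun i hi => ha.trans_le (ht.mem_Icc hi).1
  have hend : ∀ i ≤ n, |t i ^ α * h i| ≤ K * F i := fun i hi => by
    rw [abs_mul, abs_of_pos (rpow_pos_of_pos (htpos i hi) _)]
    calc t i ^ α * |h i| ≤ t i ^ α * (K * (t i - y) ^ β) :=
          mul_le_mul_of_nonneg_left (hh i hi) (rpow_nonneg (htpos i hi).le _)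
      _ = K * (t i ^ α * (t i - y) ^ β) := by ring
      _ ≤ K * F i := mul_le_mul_of_nonneg_left
          (rpow_mul_rpow_le_rpow_add hα hαβ (sub_nonneg.2 (hyt i hi)) (by linarith)) hK
  have hstep : ∀ i ∈ range n, |(t i ^ α - t (i + 1) ^ α) * h i|
      ≤ K * (-α / (α + β)) * (F (i + 1) - F i) := fun i hi => by
    have hi : i < n := mem_range.1 hi
    have hlt := ht.2.2 i hi
    have hdec : 0 ≤ t i ^ α - t (i + 1) ^ α :=
      sub_nonneg.2 (rpow_le_rpow_of_nonpos (htpos i hi.le) hlt.le hα)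
    rw [abs_mul, abs_of_nonneg hdec]
    calc (t i ^ α - t (i + 1) ^ α) * |h i| ≤ (t i ^ α - t (i + 1) ^ α) * (K * (t i - y) ^ β) :=
          mul_le_mul_of_nonneg_left (hh i hi.le) hdec
      _ = K * ((t i ^ α - t (i + 1) ^ α) * (t i - y) ^ β) := by ring
      _ ≤ K * (-α / (α + β) * (F (i + 1) - F i)) := mul_le_mul_of_nonneg_left
          (rpow_sub_rpow_mul_rpow_le hα hαβ hy (hyt i hi.le) (htpos i hi.le) hlt.le) hK
      _ = K * (-α / (α + β)) * (F (i + 1) - F i) := by ring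
  have hmid : |∑ i ∈ range n, (t i ^ α - t (i + 1) ^ α) * h i|
      ≤ K * (-α / (α + β)) * (F n - F 0) := by
    refine (abs_sum_le_sum_abs _ _).trans ((sum_le_sum hstep).trans_eq ?_)
    rw [← mul_sum, sum_range_sub]
  have hF0 : 0 ≤ F 0 := rpow_nonneg (sub_nonneg.2 (hyt 0 (Nat.zero_le _))) _
  have hcoef : K * F n + K * (-α / (α + β)) * F n = β / (α + β) * K * F n := by
    field_simp; ring
  have hcoef0 : 0 ≤ K * (-α / (α + β)) := mul_nonneg hK (div_nonneg (by linarith) hαβ.le)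
  obtain ⟨rfl, rfl, -⟩ := ht
  rw [sum_range_mul_sub_by_parts (fun i => t i ^ α)]
  calc |t n ^ α * h n - t 0 ^ α * h 0 + ∑ i ∈ range n, (t i ^ α - t (i + 1) ^ α) * h i|
      ≤ |t n ^ α * h n| + |t 0 ^ α * h 0| + |∑ i ∈ range n, (t i ^ α - t (i + 1) ^ α) * h i| :=
        (abs_add_le _ _).trans (add_le_add_left (abs_sub _ _) _)
    _ ≤ K * F n + K * F 0 + K * (-α / (α + β)) * (F n - F 0) :=
        add_le_add (add_le_add (hend n le_rfl) (hend 0 (Nat.zero_le _))) hmid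
    _ ≤ β / (α + β) * K * F n + K * F 0 := by linarith [mul_nonneg hcoef0 hF0]

def rightRSSum (φ f : ℝ → ℝ) (n : ℕ) (t : ℕ → ℝ) : ℝ :=
  ∑ i ∈ range n, φ (t (i + 1)) * (f (t (i + 1)) - f (t i))

lemma rightRSSum_add (φ f : ℝ → ℝ) (m k : ℕ) (t : ℕ → ℝ) :
    rightRSSum φ f (m + k) t = rightRSSum φ f m t + rightRSSum φ f k (fun i => t (m + i)) :=
  sum_range_add _ _ _

lemma IsPartition.append {a b c : ℝ} {m k : ℕ} {t : ℕ → ℝ} (h₁ : IsPartition a b m t)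
    (h₂ : IsPartition b c k fun i => t (m + i)) : IsPartition a c (m + k) t := by
  refine ⟨h₁.1, h₂.2.1, fun i hi => ?_⟩
  rcases lt_or_ge i m with him | him
  · exact h₁.2.2 i him
  · obtain ⟨j, rfl⟩ := Nat.exists_eq_add_of_le him
    exact h₂.2.2 j (by omega)

lemma exists_partition_mesh_le {a b δ : ℝ} (hab : a < b) (hδ : 0 < δ) :
    ∃ n t, 0 < n ∧ IsPartition a b n t ∧ ∀ i < n, t (i + 1) - t i ≤ δ := by
  set n := ⌈(b - a) / δ⌉₊
  have hn : 0 < n := Nat.ceil_pos.2 (div_pos (sub_pos.2 hab) hδ)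
  have hn' : (0 : ℝ) < n := Nat.cast_pos.2 hn
  have hstep : ∀ i : ℕ, a + (i + 1 : ℕ) * ((b - a) / n) - (a + i * ((b - a) / n)) = (b - a) / n :=
    fun i => by push_cast; ring
  refine ⟨n, fun i => a + i * ((b - a) / n), hn, ⟨by simp, by field_simp; ring, fun i _ => ?_⟩,
    fun i _ => ?_⟩
  · linarith [hstep i, div_pos (sub_pos.2 hab) hn']
  · rw [hstep, div_le_iff₀ hn', ← div_le_iff₀' hδ]
    exact Nat.le_ceil _

lemma exists_partition_through_mesh_le {a b c δ : ℝ} (hab : a < b) (hbc : b < c) (hδ : 0 < δ) :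
    ∃ m k t, 0 < m ∧ 0 < k ∧ IsPartition a b m t ∧ IsPartition b c k (fun i => t (m + i)) ∧
      ∀ i < m + k, t (i + 1) - t i ≤ δ := by
  obtain ⟨m, t₁, hm, ht₁, hmesh₁⟩ := exists_partition_mesh_le hab hδ
  obtain ⟨k, t₂, hk, ht₂, hmesh₂⟩ := exists_partition_mesh_le hbc hδ
  have hfirst : ∀ i ≤ m, (if i ≤ m then t₁ i else t₂ (i - m)) = t₁ i := fun i hi => if_pos hi
  have hsecond : ∀ j, (if m + j ≤ m then t₁ (m + j) else t₂ (m + j - m)) = t₂ j := fun j => by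
    rcases j.eq_zero_or_pos with rfl | hj
    · simp [ht₁.2.1, ht₂.1]
    · rw [if_neg (by omega), Nat.add_sub_cancel_left]
  refine ⟨m, k, fun i => if i ≤ m then t₁ i else t₂ (i - m), hm, hk, ?_, ?_, fun i hi => ?_⟩
  · refine ⟨(hfirst 0 (Nat.zero_le _)).trans ht₁.1, (hfirst m le_rfl).trans ht₁.2.1,
      fun i hi => ?_⟩
    simpa only [hfirst i hi.le, hfirst (i + 1) hi] using ht₁.2.2 i hi
  · simpa only [hsecond] using ht₂
  · rcases lt_or_ge i m with him | him
    · simpa only [hfirst i him.le, hfirst (i + 1) him] using hmesh₁ i him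
    · obtain ⟨j, rfl⟩ := Nat.exists_eq_add_of_le him
      simpa only [hsecond, add_assoc] using hmesh₂ j (by omega)

section RSIntegral

variable {φ f : ℝ → ℝ} {a b c I J B : ℝ}

lemma RSIntegral.abs_rightRSSum_sub_le (hI : RSIntegral φ f a b I) {ε : ℝ} (hε : 0 < ε) :
    ∃ δ > 0, ∀ n t, 0 < n → IsPartition a b n t → (∀ i < n, t (i + 1) - t i ≤ δ) →
      |rightRSSum φ f n t - I| ≤ ε := by
  obtain ⟨δ, hδ, hI⟩ := hI ε hε
  exact ⟨δ, hδ, fun n t hn ht hmesh =>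
    hI n t (fun i => t (i + 1)) hn ht.1 ht.2.1 ht.2.2 hmesh fun i hi => ⟨(ht.2.2 i hi).le, le_rfl⟩⟩

lemma RSIntegral.abs_le (hab : a < b) (hI : RSIntegral φ f a b I)
    (hB : ∀ n t, IsPartition a b n t → |rightRSSum φ f n t| ≤ B) : |I| ≤ B := by
  refine le_of_forall_pos_le_add fun ε hε => ?_
  obtain ⟨δ, hδ, hI⟩ := hI.abs_rightRSSum_sub_le hε
  obtain ⟨n, t, hn, ht, hmesh⟩ := exists_partition_mesh_le hab hδ
  have := hI n t hn ht hmesh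
  have := hB n t ht
  linarith [abs_sub_abs_le_abs_sub I (rightRSSum φ f n t), abs_sub_comm I (rightRSSum φ f n t)]

lemma RSIntegral.abs_sub_le (hab : a < b) (hbc : b < c) (hI : RSIntegral φ f a c I)
    (hJ : RSIntegral φ f a b J) (hB : ∀ n t, IsPartition b c n t → |rightRSSum φ f n t| ≤ B) :
    |I - J| ≤ B := by
  refine le_of_forall_pos_le_add fun ε hε => ?_
  obtain ⟨δ₁, hδ₁, hI⟩ := hI.abs_rightRSSum_sub_le (half_pos hε)
  obtain ⟨δ₂, hδ₂, hJ⟩ := hJ.abs_rightRSSum_sub_le (half_pos hε)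
  obtain ⟨m, k, t, hm, hk, ht₁, ht₂, hmesh⟩ :=
    exists_partition_through_mesh_le hab hbc (lt_min hδ₁ hδ₂)
  have hfull := hI (m + k) t (by omega) (ht₁.append ht₂)
    fun i hi => (hmesh i hi).trans (min_le_left _ _)
  have hfirst := hJ m t hm ht₁ fun i hi => (hmesh i (by omega)).trans (min_le_right _ _)
  have hsecond := hB k _ ht₂
  rw [rightRSSum_add] at hfull
  rw [_root_.abs_le] at hfull hfirst hsecond ⊢
  constructor <;> linarith

end RSIntegral

lemma abs_rightRSSum_rpow_le {α β K T y a b : ℝ} {f : ℝ → ℝ} {n : ℕ} {t : ℕ → ℝ}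
    (hα : α ≤ 0) (hαβ : 0 < α + β) (hK : 0 ≤ K)
    (hf : ∀ x ∈ Icc (0:ℝ) T, ∀ y ∈ Icc (0:ℝ) T, |f x - f y| ≤ K * |x - y| ^ β)
    (ht : IsPartition a b n t) (hy : 0 ≤ y) (hya : y ≤ a) (ha : 0 < a) (hbT : b ≤ T) :
    |rightRSSum (· ^ α) f n t| ≤ β / (α + β) * K * (b - y) ^ (α + β) + K * (a - y) ^ (α + β) := by
  have hmem : ∀ i ≤ n, t i ∈ Icc 0 T := fun i hi =>
    ⟨ha.le.trans (ht.mem_Icc hi).1, (ht.mem_Icc hi).2.trans hbT⟩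
  have hh : ∀ i ≤ n, |f (t i) - f y| ≤ K * (t i - y) ^ β := fun i hi => by
    have hyt : y ≤ t i := hya.trans (ht.mem_Icc hi).1
    simpa [abs_of_nonneg (sub_nonneg.2 hyt)] using
      hf _ (hmem i hi) y ⟨hy, hyt.trans (hmem i hi).2⟩
  simpa only [rightRSSum, sub_sub_sub_cancel_right] using
    abs_sum_rpow_mul_sub_le_s5 hα hαβ hK ht hy hya ha hh

theorem stmt5_general (T β α K : ℝ) (f g : ℝ → ℝ) (G : ℝ → ℝ → ℝ)
    (hα : α < 0) (hαβ : 0 < α + β)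
    (hK : 0 ≤ K)
    (hf : ∀ x ∈ Set.Icc (0:ℝ) T, ∀ y ∈ Set.Icc (0:ℝ) T, |f x - f y| ≤ K * |x - y| ^ β)
    (hG : ∀ t ∈ Set.Ioc (0:ℝ) T, ∀ c ∈ Set.Ioo (0:ℝ) t,
      RSIntegral (fun s => s ^ α) f c t (G c t))
    (hg : ∀ t ∈ Set.Ioc (0:ℝ) T,
      Filter.Tendsto (fun c => G c t) (nhdsWithin 0 (Set.Ioi 0)) (nhds (g t)))
    (hg0 : g 0 = 0) :
    ∀ x ∈ Set.Icc (0:ℝ) T, ∀ y ∈ Set.Icc (0:ℝ) T,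
      |g x - g y| ≤ (β / (α + β)) * K * |x - y| ^ (α + β) := by
  intro x hx y hy
  wlog hyx : y < x generalizing x y
  · rcases (not_lt.1 hyx).eq_or_lt with rfl | hxy
    · simp [zero_rpow hαβ.ne']
    · simpa only [abs_sub_comm] using this y hy x hx hxy
  have hx0 : x ∈ Ioc 0 T := ⟨hy.1.trans_lt hyx, hx.2⟩
  rw [abs_of_pos (sub_pos.2 hyx)]
  rcases hy.1.eq_or_lt with rfl | hy0
  · have hlim : Tendsto (fun c : ℝ => K * (c - 0) ^ (α + β)) (𝓝[>] 0) (𝓝 0) :=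
      ((continuous_const.mul ((continuous_id.sub continuous_const).rpow_const
        fun _ => Or.inr hαβ.le)).tendsto' 0 0 (by simp [zero_rpow hαβ.ne'])).mono_left
        nhdsWithin_le_nhds
    rw [hg0, sub_zero (g x)]
    refine le_of_tendsto_of_tendsto (hg x hx0).abs
      (by simpa only [add_zero] using tendsto_const_nhds.add hlim) ?_
    filter_upwards [Ioo_mem_nhdsGT hx0.1] with c hc
    exact (hG x hx0 c hc).abs_le hc.2 fun n t ht =>
      abs_rightRSSum_rpow_le hα.le hαβ hK hf ht le_rfl hc.1.le hc.1 hx.2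
  · refine le_of_tendsto ((hg x hx0).sub (hg y ⟨hy0, hy.2⟩)).abs ?_
    filter_upwards [Ioo_mem_nhdsGT hy0] with c hc
    refine (hG x hx0 c ⟨hc.1, hc.2.trans hyx⟩).abs_sub_le hc.2 hyx (hG y ⟨hy0, hy.2⟩ c hc)
      fun n t ht => ?_
    simpa [zero_rpow hαβ.ne'] using
      abs_rightRSSum_rpow_le hα.le hαβ hK hf ht hy0.le le_rfl hy0 hx.2

/-- Lemma A.5 of the paper: if `f` is `β`-Hölder on `[0,T]`, `α < 0`, `α + β > 0`, and
`g(t) = ∫₀^t s^α df(s)` (improper Riemann–Stieltjes integral, limit of `∫_c^t` as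
`c → 0⁺`), then `g` is `(α+β)`-Hölder with seminorm at most `(β/(α+β)) ‖f‖_β`. -/
theorem stmt5 (T β α K : ℝ) (f g : ℝ → ℝ) (G : ℝ → ℝ → ℝ)
    (hβ : 0 < β) (hβ1 : β ≤ 1) (hα : α < 0) (hαβ : 0 < α + β) (hT : 0 < T)
    (hK : 0 ≤ K)
    (hf : ∀ x ∈ Set.Icc (0:ℝ) T, ∀ y ∈ Set.Icc (0:ℝ) T, |f x - f y| ≤ K * |x - y| ^ β)
    (hG : ∀ t ∈ Set.Ioc (0:ℝ) T, ∀ c ∈ Set.Ioo (0:ℝ) t,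
      RSIntegral (fun s => s ^ α) f c t (G c t))
    (hg : ∀ t ∈ Set.Ioc (0:ℝ) T,
      Filter.Tendsto (fun c => G c t) (nhdsWithin 0 (Set.Ioi 0)) (nhds (g t)))
    (hg0 : g 0 = 0) :
    ∀ x ∈ Set.Icc (0:ℝ) T, ∀ y ∈ Set.Icc (0:ℝ) T,
      |g x - g y| ≤ (β / (α + β)) * K * |x - y| ^ (α + β) :=
  stmt5_general T β α K f g G hα hαβ hK hf hG hg hg0
end

section
/- Let α ∈ (-1/2, 0), β ∈ (0,1] with 0 < 2α + β ≤ 1, f ∈ C^β([0,T]), and define g(t) = ∫₀^t s^α (t-s)^α df(s). Then there is a constant C depending only on α, β such that |g(b) - g(a)| ≤ C ‖f‖_β (b-a)^{2α+β} for all 0 ≤ a < b ≤ T; i.e., g ∈ C^{2α+β}([0,T]). -/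
open Set

namespace StieltjesHolder

def stieltjesSum (f ψ : ℝ → ℝ) (t : ℕ → ℝ) (n : ℕ) : ℝ :=
  ∑ i ∈ Finset.range n, ψ (t i) * (f (t (i + 1)) - f (t i))

lemma stieltjesSum_sub (f φ ψ : ℝ → ℝ) (t : ℕ → ℝ) (n : ℕ) :
    stieltjesSum f (φ - ψ) t n = stieltjesSum f φ t n - stieltjesSum f ψ t n := by
  simp only [stieltjesSum, Pi.sub_apply, sub_mul, Finset.sum_sub_distrib]

structure IsPartition (t : ℕ → ℝ) (n : ℕ) (x y δ : ℝ) : Prop where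
  pos : 0 < n
  first : t 0 = x
  last : t n = y
  lt_succ : ∀ i < n, t i < t (i + 1)
  mesh_le : ∀ i < n, t (i + 1) - t i ≤ δ

namespace IsPartition

variable {t : ℕ → ℝ} {n : ℕ} {x y δ : ℝ}

lemma le_succ (h : IsPartition t n x y δ) : ∀ i < n, t i ≤ t (i + 1) :=
  fun i hi => (h.lt_succ i hi).le

lemma le_of_le (h : IsPartition t n x y δ) {i j : ℕ} (hij : i ≤ j) (hjn : j ≤ n) :
    t i ≤ t j := by
  induction j, hij using Nat.le_induction with
  | base => rfl
  | succ j _ ih => exact (ih (by omega)).trans (h.le_succ j (by omega))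

lemma mem_Icc (h : IsPartition t n x y δ) {i : ℕ} (hi : i ≤ n) : t i ∈ Icc x y :=
  ⟨h.first ▸ h.le_of_le (Nat.zero_le i) hi, h.last ▸ h.le_of_le hi le_rfl⟩

lemma mono {δ' : ℝ} (h : IsPartition t n x y δ) (hδ : δ ≤ δ') : IsPartition t n x y δ' :=
  ⟨h.pos, h.first, h.last, h.lt_succ, fun i hi => (h.mesh_le i hi).trans hδ⟩

end IsPartition

lemma exists_isPartition {x y δ : ℝ} (hxy : x < y) (hδ : 0 < δ) :
    ∃ n t, IsPartition t n x y δ := by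
  set n := ⌈(y - x) / δ⌉₊
  have hn : 0 < n := Nat.ceil_pos.mpr (div_pos (sub_pos.mpr hxy) hδ)
  have hn' : (0 : ℝ) < n := Nat.cast_pos.mpr hn
  have hstep : (y - x) / n ≤ δ := by
    rw [div_le_iff₀ hn', ← div_le_iff₀' hδ]
    exact Nat.le_ceil _
  refine ⟨n, fun i => x + i * ((y - x) / n), hn, by simp, by field_simp; ring, ?_, ?_⟩
  · intro i _
    push_cast
    nlinarith [div_pos (sub_pos.mpr hxy) hn']
  · intro i _
    push_cast
    linarith

def append (t₁ t₂ : ℕ → ℝ) (n₁ : ℕ) : ℕ → ℝ := fun i => if i < n₁ then t₁ i else t₂ (i - n₁)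

section Append

variable {t₁ t₂ : ℕ → ℝ} {n₁ n₂ : ℕ}

lemma append_of_le (hend : t₁ n₁ = t₂ 0) {i : ℕ} (hi : i ≤ n₁) : append t₁ t₂ n₁ i = t₁ i := by
  rcases hi.lt_or_eq with hi | rfl
  · simp [append, hi]
  · simp [append, hend]

lemma append_of_ge {i : ℕ} (hi : n₁ ≤ i) : append t₁ t₂ n₁ i = t₂ (i - n₁) := by
  simp [append, not_lt.mpr hi]

lemma forall_append_step (hend : t₁ n₁ = t₂ 0) {P : ℝ → ℝ → Prop}
    (h₁ : ∀ i < n₁, P (t₁ i) (t₁ (i + 1))) (h₂ : ∀ j < n₂, P (t₂ j) (t₂ (j + 1))) :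
    ∀ i < n₁ + n₂, P (append t₁ t₂ n₁ i) (append t₁ t₂ n₁ (i + 1)) := by
  intro i hi
  by_cases hin : i < n₁
  · rw [append_of_le hend hin.le, append_of_le hend hin]
    exact h₁ i hin
  · rw [append_of_ge (by omega), append_of_ge (by omega), show i + 1 - n₁ = i - n₁ + 1 by omega]
    exact h₂ _ (by omega)

lemma IsPartition.append {x y z δ : ℝ} (h₁ : IsPartition t₁ n₁ x y δ)
    (h₂ : IsPartition t₂ n₂ y z δ) : IsPartition (append t₁ t₂ n₁) (n₁ + n₂) x z δ := by
  have hend : t₁ n₁ = t₂ 0 := h₁.last.trans h₂.first.symm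
  refine ⟨by have := h₁.pos; omega, ?_, ?_, forall_append_step hend h₁.lt_succ h₂.lt_succ,
    forall_append_step (P := fun u v => v - u ≤ δ) hend h₁.mesh_le h₂.mesh_le⟩
  · rw [append_of_le hend (Nat.zero_le _), h₁.first]
  · rw [append_of_ge (by omega), Nat.add_sub_cancel_left, h₂.last]

lemma stieltjesSum_append (f ψ : ℝ → ℝ) (hend : t₁ n₁ = t₂ 0) :
    stieltjesSum f ψ (append t₁ t₂ n₁) (n₁ + n₂) =
      stieltjesSum f ψ t₁ n₁ + stieltjesSum f ψ t₂ n₂ := by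
  unfold stieltjesSum
  rw [Finset.sum_range_add]
  congr 1
  · refine Finset.sum_congr rfl fun i hi => ?_
    have hi : i < n₁ := Finset.mem_range.mp hi
    rw [append_of_le hend hi.le, append_of_le hend hi]
  · refine Finset.sum_congr rfl fun j _ => ?_
    rw [append_of_ge (by omega), append_of_ge (by omega), Nat.add_sub_cancel_left,
      show n₁ + j + 1 - n₁ = j + 1 by omega]

end Append

lemma _root_.RSIntegral.exists_forall_isPartition {φ f : ℝ → ℝ} {x y I ε : ℝ}
    (h : RSIntegral φ f x y I) (hε : 0 < ε) :
    ∃ δ > 0, ∀ n t, IsPartition t n x y δ → |stieltjesSum f φ t n - I| ≤ ε := by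
  obtain ⟨δ, hδ, H⟩ := h ε hε
  exact ⟨δ, hδ, fun n t ht => H n t t ht.pos ht.first ht.last ht.lt_succ ht.mesh_le
    fun i hi => ⟨le_rfl, ht.le_succ i hi⟩⟩

/-- Existence of the integral is only assumed on the intervals `[c, t - c]`, so estimates on
subintervals are carried by Riemann–Stieltjes sums over arbitrarily fine partitions. -/
def FineSumBound (f ψ : ℝ → ℝ) (x y B : ℝ) : Prop :=
  ∀ δ > 0, ∃ n t, IsPartition t n x y δ ∧ |stieltjesSum f ψ t n| ≤ B

namespace FineSumBound

variable {f ψ : ℝ → ℝ} {x y z B B₁ B₂ : ℝ}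

lemma mono (h : FineSumBound f ψ x y B₁) (hB : B₁ ≤ B₂) : FineSumBound f ψ x y B₂ :=
  fun δ hδ => (h δ hδ).imp fun _ => .imp fun _ => .imp_right hB.trans'

lemma append (h₁ : FineSumBound f ψ x y B₁) (h₂ : FineSumBound f ψ y z B₂) :
    FineSumBound f ψ x z (B₁ + B₂) := by
  intro δ hδ
  obtain ⟨n₁, t₁, ht₁, hB₁⟩ := h₁ δ hδ
  obtain ⟨n₂, t₂, ht₂, hB₂⟩ := h₂ δ hδ
  refine ⟨n₁ + n₂, StieltjesHolder.append t₁ t₂ n₁, ht₁.append ht₂, ?_⟩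
  rw [stieltjesSum_append f ψ (ht₁.last.trans ht₂.first.symm)]
  exact (abs_add_le _ _).trans (add_le_add hB₁ hB₂)

end FineSumBound

lemma _root_.RSIntegral.abs_le_of_fineSumBound {ψ f : ℝ → ℝ} {x y I B : ℝ}
    (hI : RSIntegral ψ f x y I) (hB : FineSumBound f ψ x y B) : |I| ≤ B := by
  refine le_of_forall_pos_le_add fun ε hε => ?_
  obtain ⟨δ, hδ, hI⟩ := hI.exists_forall_isPartition hε
  obtain ⟨n, t, ht, hS⟩ := hB δ hδ
  have := hI n t ht
  rw [abs_le] at *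
  constructor <;> linarith

lemma _root_.RSIntegral.abs_sub_le_of_fineSumBound {φ ψ f : ℝ → ℝ} {x y z I J B₁ B₂ : ℝ}
    (hI : RSIntegral φ f x z I) (hJ : RSIntegral ψ f x y J)
    (h₁ : FineSumBound f (φ - ψ) x y B₁) (h₂ : FineSumBound f φ y z B₂) :
    |I - J| ≤ B₁ + B₂ := by
  refine le_of_forall_pos_le_add fun ε hε => ?_
  obtain ⟨δI, hδI, hI⟩ := hI.exists_forall_isPartition (half_pos hε)
  obtain ⟨δJ, hδJ, hJ⟩ := hJ.exists_forall_isPartition (half_pos hε)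
  obtain ⟨n₁, t₁, ht₁, hS₁⟩ := h₁ _ (lt_min hδI hδJ)
  obtain ⟨n₂, t₂, ht₂, hS₂⟩ := h₂ _ (lt_min hδI hδJ)
  have hI := hI _ _ ((ht₁.append ht₂).mono (min_le_left _ _))
  have hJ := hJ _ _ (ht₁.mono (min_le_right _ _))
  rw [stieltjesSum_append f φ (ht₁.last.trans ht₂.first.symm)] at hI
  rw [stieltjesSum_sub] at hS₁
  rw [abs_le] at *
  constructor <;> linarith

section Abel

variable {u v w : ℕ → ℝ} {n : ℕ}

lemma abs_sum_mul_sub_le {B : ℝ} (hB : ∀ i ≤ n, |u i - u n| ≤ B) :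
    |∑ i ∈ Finset.range n, w i * (u (i + 1) - u i)| ≤
      B * (|w 0| + ∑ i ∈ Finset.range n, |w (i + 1) - w i|) := by
  have htel := Finset.sum_range_sub (fun i => w i * (u i - u n)) n
  simp only [sub_self, mul_zero, zero_sub] at htel
  have hparts : ∑ i ∈ Finset.range n, w i * (u (i + 1) - u i) =
      ∑ i ∈ Finset.range n, (w i - w (i + 1)) * (u (i + 1) - u n) - w 0 * (u 0 - u n) := by
    rw [sub_eq_add_neg, ← htel, ← Finset.sum_add_distrib]
    exact Finset.sum_congr rfl fun i _ => by ring
  have hterm : ∀ i ∈ Finset.range n,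
      |(w i - w (i + 1)) * (u (i + 1) - u n)| ≤ |w (i + 1) - w i| * B := fun i hi => by
    rw [abs_mul, abs_sub_comm (w i)]
    exact mul_le_mul_of_nonneg_left (hB _ (Finset.mem_range.mp hi)) (abs_nonneg _)
  calc _ ≤ ∑ i ∈ Finset.range n, |(w i - w (i + 1)) * (u (i + 1) - u n)| +
        |w 0 * (u 0 - u n)| := by
        rw [hparts]
        exact (abs_sub _ _).trans (add_le_add_left (Finset.abs_sum_le_sum_abs _ _) _)
    _ ≤ ∑ i ∈ Finset.range n, |w (i + 1) - w i| * B + |w 0| * B := by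
        rw [abs_mul]
        gcongr with i hi
        · exact hterm i hi
        · exact hB 0 (Nat.zero_le n)
    _ = B * (|w 0| + ∑ i ∈ Finset.range n, |w (i + 1) - w i|) := by
        rw [← Finset.sum_mul]; ring

lemma sum_abs_sub_le_two_mul {M : ℝ}
    (hw : (∀ i < n, w i ≤ w (i + 1)) ∨ (∀ i < n, w (i + 1) ≤ w i)) (hM : ∀ i ≤ n, |w i| ≤ M) :
    ∑ i ∈ Finset.range n, |w (i + 1) - w i| ≤ 2 * M := by
  have h0 := abs_le.mp (hM 0 (Nat.zero_le n))
  have hn := abs_le.mp (hM n le_rfl)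
  rcases hw with hw | hw
  · rw [Finset.sum_congr rfl fun i hi =>
      abs_of_nonneg (sub_nonneg.mpr (hw i (Finset.mem_range.mp hi))), Finset.sum_range_sub]
    linarith
  · rw [Finset.sum_congr rfl fun i hi =>
      abs_of_nonpos (sub_nonpos.mpr (hw i (Finset.mem_range.mp hi)))]
    simp only [neg_sub]
    rw [Finset.sum_range_sub']
    linarith

lemma sum_abs_sub_mul_le {M₁ M₂ : ℝ} (hv : ∀ i ≤ n, |v i| ≤ M₁) (hw : ∀ i ≤ n, |w i| ≤ M₂) :
    ∑ i ∈ Finset.range n, |v (i + 1) * w (i + 1) - v i * w i| ≤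
      M₁ * ∑ i ∈ Finset.range n, |w (i + 1) - w i| +
        M₂ * ∑ i ∈ Finset.range n, |v (i + 1) - v i| := by
  rw [Finset.mul_sum, Finset.mul_sum, ← Finset.sum_add_distrib]
  refine Finset.sum_le_sum fun i hi => ?_
  have hi := Finset.mem_range.mp hi
  calc |v (i + 1) * w (i + 1) - v i * w i|
      = |v (i + 1) * (w (i + 1) - w i) + w i * (v (i + 1) - v i)| := by ring_nf
    _ ≤ |v (i + 1)| * |w (i + 1) - w i| + |w i| * |v (i + 1) - v i| := by
        rw [← abs_mul, ← abs_mul]; exact abs_add_le _ _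
    _ ≤ M₁ * |w (i + 1) - w i| + M₂ * |v (i + 1) - v i| := by
        gcongr
        · exact hv _ hi
        · exact hw _ hi.le

end Abel

def HolderOnIcc (f : ℝ → ℝ) (K β T : ℝ) : Prop :=
  ∀ x ∈ Icc (0 : ℝ) T, ∀ y ∈ Icc (0 : ℝ) T, |f x - f y| ≤ K * |x - y| ^ β

lemma fineSumBound_mul {f ψ₁ ψ₂ : ℝ → ℝ} {K β T x y M₁ M₂ : ℝ} (hf : HolderOnIcc f K β T)
    (hK : 0 ≤ K) (hβ : 0 ≤ β) (hx : 0 ≤ x) (hxy : x < y) (hyT : y ≤ T)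
    (hψ₁ : MonotoneOn ψ₁ (Icc x y) ∨ AntitoneOn ψ₁ (Icc x y))
    (hψ₂ : MonotoneOn ψ₂ (Icc x y) ∨ AntitoneOn ψ₂ (Icc x y))
    (hM₁ : ∀ s ∈ Icc x y, |ψ₁ s| ≤ M₁) (hM₂ : ∀ s ∈ Icc x y, |ψ₂ s| ≤ M₂) :
    FineSumBound f (fun s => ψ₁ s * ψ₂ s) x y (5 * K * (y - x) ^ β * (M₁ * M₂)) := by
  intro δ hδ
  obtain ⟨n, t, ht⟩ := exists_isPartition hxy hδ
  refine ⟨n, t, ht, ?_⟩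
  have hmono : ∀ {ψ : ℝ → ℝ}, (MonotoneOn ψ (Icc x y) ∨ AntitoneOn ψ (Icc x y)) →
      (∀ i < n, ψ (t i) ≤ ψ (t (i + 1))) ∨ (∀ i < n, ψ (t (i + 1)) ≤ ψ (t i)) := fun hψ =>
    hψ.imp (fun h i hi => h (ht.mem_Icc hi.le) (ht.mem_Icc hi) (ht.le_succ i hi))
      (fun h i hi => h (ht.mem_Icc hi.le) (ht.mem_Icc hi) (ht.le_succ i hi))
  have hB : ∀ i ≤ n, |f (t i) - f (t n)| ≤ K * (y - x) ^ β := fun i hi => by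
    have hti := ht.mem_Icc hi
    have htn := ht.mem_Icc le_rfl
    refine (hf _ ⟨hx.trans hti.1, hti.2.trans hyT⟩ _ ⟨hx.trans htn.1, htn.2.trans hyT⟩).trans ?_
    gcongr
    exact abs_sub_le_iff.mpr ⟨by linarith [hti.2, htn.1], by linarith [hti.1, htn.2]⟩
  have hM₁' : ∀ i ≤ n, |ψ₁ (t i)| ≤ M₁ := fun i hi => hM₁ _ (ht.mem_Icc hi)
  have hM₂' : ∀ i ≤ n, |ψ₂ (t i)| ≤ M₂ := fun i hi => hM₂ _ (ht.mem_Icc hi)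
  have hM₁0 : 0 ≤ M₁ := (abs_nonneg _).trans (hM₁' 0 (Nat.zero_le n))
  have hvar := sum_abs_sub_mul_le hM₁' hM₂'
  have hvar₁ := sum_abs_sub_le_two_mul (hmono hψ₁) hM₁'
  have hvar₂ := sum_abs_sub_le_two_mul (hmono hψ₂) hM₂'
  have h0 : |ψ₁ (t 0) * ψ₂ (t 0)| ≤ M₁ * M₂ := by
    rw [abs_mul]; exact mul_le_mul (hM₁' 0 (by omega)) (hM₂' 0 (by omega)) (abs_nonneg _) hM₁0
  refine (abs_sum_mul_sub_le (w := fun i => ψ₁ (t i) * ψ₂ (t i)) hB).trans ?_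
  have hKB : 0 ≤ K * (y - x) ^ β := mul_nonneg hK (Real.rpow_nonneg (by linarith) _)
  have hM₂0 : 0 ≤ M₂ := (abs_nonneg _).trans (hM₂' 0 (Nat.zero_le n))
  calc _ ≤ K * (y - x) ^ β * (M₁ * M₂ + (M₁ * (2 * M₂) + M₂ * (2 * M₁))) := by
        gcongr
        exact hvar.trans (by gcongr)
    _ = 5 * K * (y - x) ^ β * (M₁ * M₂) := by ring

noncomputable def dyadicFactor (γ : ℝ) : ℝ := (1 - (2 ^ γ)⁻¹)⁻¹

lemma dyadicFactor_pos {γ : ℝ} (hγ : 0 < γ) : 0 < dyadicFactor γ :=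
  inv_pos.mpr (sub_pos.mpr (inv_lt_one_of_one_lt₀ (Real.one_lt_rpow (by norm_num) hγ)))

lemma dyadicFactor_mul_inv_add_one {γ : ℝ} (hγ : 0 < γ) :
    dyadicFactor γ * (2 ^ γ)⁻¹ + 1 = dyadicFactor γ := by
  have hq : (1 : ℝ) - (2 ^ γ)⁻¹ ≠ 0 :=
    (sub_pos.mpr (inv_lt_one_of_one_lt₀ (Real.one_lt_rpow (by norm_num) hγ))).ne'
  unfold dyadicFactor
  generalize ((2 : ℝ) ^ γ)⁻¹ = q at hq ⊢
  field_simp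
  ring

lemma one_le_dyadicFactor {γ : ℝ} (hγ : 0 < γ) : 1 ≤ dyadicFactor γ := by
  have := mul_nonneg (dyadicFactor_pos hγ).le (inv_nonneg.mpr (Real.rpow_nonneg zero_le_two γ))
  linarith [dyadicFactor_mul_inv_add_one hγ]

section Dyadic

variable {Q : ℝ → ℝ → ℝ → Prop}

/-- `Q x y B` stands for `FineSumBound f ψ x y B`; keeping it abstract lets `dyadic_right`
follow by reflection. The interval `[u, p + d]` is cut at the points `p + d / 2 ^ k`. -/
lemma dyadic_left (happend : ∀ {x y z B₁ B₂}, Q x y B₁ → Q y z B₂ → Q x z (B₁ + B₂))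
    (hmono : ∀ {x y B₁ B₂}, Q x y B₁ → B₁ ≤ B₂ → Q x y B₂) {p d γ A : ℝ} (hγ : 0 < γ) (hA : 0 ≤ A)
    (hblock : ∀ x y, p < x → x < y → y ≤ p + d → y - p ≤ 2 * (x - p) →
      Q x y (A * (y - p) ^ γ))
    {u : ℝ} (hpu : p < u) (hud : u < p + d) : Q u (p + d) (A * dyadicFactor γ * d ^ γ) := by
  have hd : 0 < d := by linarith
  have hcg := dyadicFactor_mul_inv_add_one hγ
  suffices H : ∀ N : ℕ, ∀ e ∈ Ioc 0 d, ∀ u, p + e / 2 ^ N ≤ u → u < p + e →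
      Q u (p + e) (A * dyadicFactor γ * e ^ γ) by
    obtain ⟨N, hN⟩ := exists_pow_lt_of_lt_one (div_pos (sub_pos.mpr hpu) hd)
      (by norm_num : (1 / 2 : ℝ) < 1)
    rw [lt_div_iff₀ hd, one_div_pow, one_div_mul_eq_div] at hN
    exact H N d ⟨hd, le_rfl⟩ u (by linarith) hud
  intro N
  induction N with
  | zero =>
    intro e _ u hu hue
    simp only [pow_zero, div_one] at hu
    linarith
  | succ N ih =>
    intro e he u hu hue
    have hAe : 0 ≤ A * e ^ γ := mul_nonneg hA (Real.rpow_nonneg he.1.le _)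
    have hblock_top : ∀ x, p + e / 2 ≤ x → x < p + e → Q x (p + e) (A * e ^ γ) := fun x hx hxe => by
      simpa using hblock x (p + e) (by linarith [he.1]) hxe (by linarith [he.2]) (by linarith)
    by_cases hmid : p + e / 2 ≤ u
    · refine hmono (hblock_top u hmid hue) ?_
      rw [mul_right_comm]
      exact le_mul_of_one_le_right hAe (one_le_dyadicFactor hγ)
    · push Not at hmid
      have hlow := ih (e / 2) ⟨half_pos he.1, by linarith [he.2]⟩ u
        (by rwa [div_div, ← pow_succ']) hmid
      refine hmono (happend hlow (hblock_top _ le_rfl (by linarith [he.1]))) (le_of_eq ?_)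
      rw [Real.div_rpow he.1.le (by norm_num)]
      linear_combination (A * e ^ γ) * hcg

lemma dyadic_right (happend : ∀ {x y z B₁ B₂}, Q x y B₁ → Q y z B₂ → Q x z (B₁ + B₂))
    (hmono : ∀ {x y B₁ B₂}, Q x y B₁ → B₁ ≤ B₂ → Q x y B₂) {p d γ A : ℝ} (hγ : 0 < γ) (hA : 0 ≤ A)
    (hblock : ∀ x y, p - d ≤ x → x < y → y < p → p - x ≤ 2 * (p - y) →
      Q x y (A * (p - x) ^ γ))
    {v : ℝ} (hdv : p - d < v) (hvp : v < p) : Q (p - d) v (A * dyadicFactor γ * d ^ γ) := by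
  have H := dyadic_left (Q := fun x y B => Q (-y) (-x) B)
    (fun h₁ h₂ => by rw [add_comm]; exact happend h₂ h₁) hmono hγ hA (p := -p) (d := d)
    (fun x y hx hxy hy h2 => by
      simpa [sub_neg_eq_add, add_comm] using
        hblock (-y) (-x) (by linarith) (by linarith) (by linarith) (by linarith))
    (u := -v) (by linarith) (by linarith)
  simpa [neg_add_eq_sub] using H

end Dyadic

lemma rpow_mul_rpow_le_of_le_two_mul {h r R β e : ℝ} (hβ : 0 ≤ β) (he : e ≤ 0) (hh : 0 ≤ h)
    (hhR : h ≤ R) (hr : 0 < r) (hrR : r ≤ R) (hRr : R ≤ 2 * r) :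
    h ^ β * r ^ e ≤ 2 ^ (-e) * R ^ (e + β) := by
  have hR : 0 < R := hr.trans_le hrR
  calc h ^ β * r ^ e ≤ R ^ β * (R / 2) ^ e :=
        mul_le_mul (Real.rpow_le_rpow hh hhR hβ)
          (Real.rpow_le_rpow_of_nonpos (half_pos hR) (by linarith) he)
          (Real.rpow_nonneg hr.le _) (Real.rpow_nonneg hR.le _)
    _ = 2 ^ (-e) * R ^ (e + β) := by
        rw [Real.div_rpow hR.le (by norm_num), Real.rpow_add hR e β, Real.rpow_neg (by norm_num)]
        ring

section Singular

variable {f ψ₁ ψ₂ : ℝ → ℝ} {K β T p d e A M : ℝ}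

lemma fineSumBound_singular_left (hf : HolderOnIcc f K β T) (hK : 0 ≤ K) (hβ : 0 ≤ β)
    (he : e ≤ 0) (hβe : 0 < e + β) (hp : 0 ≤ p) (hdT : p + d ≤ T) (hA : 0 ≤ A)
    (hψ₁ : MonotoneOn ψ₁ (Ioc p (p + d)) ∨ AntitoneOn ψ₁ (Ioc p (p + d)))
    (hψ₂ : MonotoneOn ψ₂ (Ioc p (p + d)) ∨ AntitoneOn ψ₂ (Ioc p (p + d)))
    (hψ₁_le : ∀ s ∈ Ioc p (p + d), |ψ₁ s| ≤ A * (s - p) ^ e)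
    (hψ₂_le : ∀ s ∈ Ioc p (p + d), |ψ₂ s| ≤ M) {u : ℝ} (hpu : p < u) (hud : u < p + d) :
    FineSumBound f (fun s => ψ₁ s * ψ₂ s) u (p + d)
      (5 * K * A * M * 2 ^ (-e) * dyadicFactor (e + β) * d ^ (e + β)) := by
  have hM : 0 ≤ M := (abs_nonneg _).trans (hψ₂_le (p + d) ⟨by linarith, le_rfl⟩)
  refine dyadic_left (fun h₁ h₂ => h₁.append h₂) (fun h hB => h.mono hB) hβe
    (by positivity) (fun x y hpx hxy hyd h2 => ?_) hpu hud
  have hsub : Icc x y ⊆ Ioc p (p + d) := fun s hs => ⟨hpx.trans_le hs.1, hs.2.trans hyd⟩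
  refine (fineSumBound_mul hf hK hβ (by linarith) hxy (by linarith)
    (hψ₁.imp (·.mono hsub) (·.mono hsub)) (hψ₂.imp (·.mono hsub) (·.mono hsub))
    (M₁ := A * (x - p) ^ e) (fun s hs => (hψ₁_le s (hsub hs)).trans ?_)
    (fun s hs => hψ₂_le s (hsub hs))).mono ?_
  · exact mul_le_mul_of_nonneg_left
      (Real.rpow_le_rpow_of_nonpos (sub_pos.mpr hpx) (by linarith [hs.1]) he) hA
  · have := rpow_mul_rpow_le_of_le_two_mul hβ he (sub_nonneg.mpr hxy.le)
      (by linarith : y - x ≤ y - p) (sub_pos.mpr hpx) (by linarith) h2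
    calc 5 * K * (y - x) ^ β * (A * (x - p) ^ e * M)
        = 5 * K * A * M * ((y - x) ^ β * (x - p) ^ e) := by ring
      _ ≤ 5 * K * A * M * (2 ^ (-e) * (y - p) ^ (e + β)) := by gcongr
      _ = _ := by ring

lemma fineSumBound_singular_right (hf : HolderOnIcc f K β T) (hK : 0 ≤ K) (hβ : 0 ≤ β)
    (he : e ≤ 0) (hβe : 0 < e + β) (hp : 0 ≤ p - d) (hpT : p ≤ T) (hA : 0 ≤ A)
    (hψ₁ : MonotoneOn ψ₁ (Ico (p - d) p) ∨ AntitoneOn ψ₁ (Ico (p - d) p))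
    (hψ₂ : MonotoneOn ψ₂ (Ico (p - d) p) ∨ AntitoneOn ψ₂ (Ico (p - d) p))
    (hψ₁_le : ∀ s ∈ Ico (p - d) p, |ψ₁ s| ≤ M)
    (hψ₂_le : ∀ s ∈ Ico (p - d) p, |ψ₂ s| ≤ A * (p - s) ^ e) {v : ℝ} (hdv : p - d < v)
    (hvp : v < p) :
    FineSumBound f (fun s => ψ₁ s * ψ₂ s) (p - d) v
      (5 * K * A * M * 2 ^ (-e) * dyadicFactor (e + β) * d ^ (e + β)) := by
  have hM : 0 ≤ M := (abs_nonneg _).trans (hψ₁_le (p - d) ⟨le_rfl, by linarith⟩)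
  refine dyadic_right (fun h₁ h₂ => h₁.append h₂) (fun h hB => h.mono hB) hβe
    (by positivity) (fun x y hdx hxy hyp h2 => ?_) hdv hvp
  have hsub : Icc x y ⊆ Ico (p - d) p := fun s hs => ⟨hdx.trans hs.1, hs.2.trans_lt hyp⟩
  refine (fineSumBound_mul hf hK hβ (by linarith) hxy (by linarith)
    (hψ₁.imp (·.mono hsub) (·.mono hsub)) (hψ₂.imp (·.mono hsub) (·.mono hsub))
    (fun s hs => hψ₁_le s (hsub hs)) (M₂ := A * (p - y) ^ e)
    (fun s hs => (hψ₂_le s (hsub hs)).trans ?_)).mono ?_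
  · exact mul_le_mul_of_nonneg_left
      (Real.rpow_le_rpow_of_nonpos (sub_pos.mpr hyp) (by linarith [hs.2]) he) hA
  · have := rpow_mul_rpow_le_of_le_two_mul hβ he (sub_nonneg.mpr hxy.le)
      (by linarith : y - x ≤ p - x) (sub_pos.mpr hyp) (by linarith) h2
    calc 5 * K * (y - x) ^ β * (M * (A * (p - y) ^ e))
        = 5 * K * A * M * ((y - x) ^ β * (p - y) ^ e) := by ring
      _ ≤ 5 * K * A * M * (2 ^ (-e) * (p - x) ^ (e + β)) := by gcongr
      _ = _ := by ring

end Singular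

section Kernel

variable {α : ℝ}

lemma rpow_sub_rpow_add_le {z h : ℝ} (hα : α < 0) (hz : 0 < z) (hh : 0 ≤ h) :
    z ^ α - (z + h) ^ α ≤ -α * h * z ^ (α - 1) := by
  have hderiv : ∀ w ∈ Ioi z, HasDerivAt (fun w : ℝ => w ^ α) (α * w ^ (α - 1)) w :=
    fun w hw => Real.hasDerivAt_rpow_const (Or.inl (hz.trans hw).ne')
  have hslope := (convex_Ici z).mul_sub_le_image_sub_of_le_deriv
    (fun w hw => (Real.continuousAt_rpow_const _ _
      (Or.inl (hz.trans_le hw).ne')).continuousWithinAt)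
    (by rw [interior_Ici]; exact fun w hw => (hderiv w hw).differentiableAt.differentiableWithinAt)
    (C := α * z ^ (α - 1))
    (by
      rw [interior_Ici]
      intro w hw
      rw [(hderiv w hw).deriv]
      exact mul_le_mul_of_nonpos_left
        (Real.rpow_le_rpow_of_nonpos hz (le_of_lt hw) (by linarith)) hα.le)
    z self_mem_Ici (z + h) (by simpa using hh) (by linarith)
  linear_combination hslope

lemma antitoneOn_rpow_sub_rpow_add {h : ℝ} (hα : α < 0) (hh : 0 ≤ h) :
    AntitoneOn (fun z : ℝ => z ^ α - (z + h) ^ α) (Ioi 0) := by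
  have hderiv : ∀ z ∈ Ioi (0 : ℝ), HasDerivAt (fun z : ℝ => z ^ α - (z + h) ^ α)
      (α * z ^ (α - 1) - α * (z + h) ^ (α - 1)) z := fun z hz => by
    have hzh : (0 : ℝ) < z + h := by simp only [mem_Ioi] at hz; linarith
    exact (Real.hasDerivAt_rpow_const (Or.inl (ne_of_gt hz))).sub
      (by simpa using ((hasDerivAt_id' z).add_const h).rpow_const (p := α) (Or.inl hzh.ne'))
  refine antitoneOn_of_deriv_nonpos (convex_Ioi 0)
    (fun z hz => (hderiv z hz).continuousAt.continuousWithinAt)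
    (by rw [interior_Ioi]; exact fun z hz => (hderiv z hz).differentiableAt.differentiableWithinAt)
    ?_
  rw [interior_Ioi]
  intro z hz
  rw [(hderiv z hz).deriv, ← mul_sub]
  exact mul_nonpos_of_nonpos_of_nonneg hα.le (sub_nonneg.mpr
    (Real.rpow_le_rpow_of_nonpos hz (by linarith) (by linarith)))

/-- Interpolating `|(b - s)^α - (a - s)^α| ≤ (a - s)^α` with the mean value bound
`≤ -α (b - a) (a - s)^(α - 1)`. -/
lemma abs_rpow_sub_rpow_le {a b s θ : ℝ} (hα : α < 0) (hθ0 : 0 ≤ θ) (hθ1 : θ ≤ 1)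
    (hsa : s < a) (hab : a ≤ b) :
    |(b - s) ^ α - (a - s) ^ α| ≤ (-α * (b - a)) ^ θ * (a - s) ^ (α - θ) := by
  set z := a - s
  set h := b - a
  have hz : 0 < z := sub_pos.mpr hsa
  have hh : 0 ≤ h := sub_nonneg.mpr hab
  set X := z ^ α - (z + h) ^ α
  have hX0 : 0 ≤ X := sub_nonneg.mpr (Real.rpow_le_rpow_of_nonpos hz (by linarith) hα.le)
  have hXP : X ≤ z ^ α := sub_le_self _ (Real.rpow_nonneg (by linarith) _)
  have hXQ : X ≤ -α * h * z ^ (α - 1) := rpow_sub_rpow_add_le hα hz hh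
  calc |(b - s) ^ α - (a - s) ^ α| = X := by
        rw [show b - s = z + h by ring, abs_sub_comm, abs_of_nonneg hX0]
    _ = X ^ (1 - θ) * X ^ θ := by
        rw [← Real.rpow_add' hX0 (by norm_num), sub_add_cancel, Real.rpow_one]
    _ ≤ (z ^ α) ^ (1 - θ) * (-α * h * z ^ (α - 1)) ^ θ :=
        mul_le_mul (Real.rpow_le_rpow hX0 hXP (by linarith)) (Real.rpow_le_rpow hX0 hXQ hθ0)
          (Real.rpow_nonneg hX0 _) (Real.rpow_nonneg (Real.rpow_nonneg hz.le _) _)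
    _ = (-α * h) ^ θ * z ^ (α * (1 - θ) + (α - 1) * θ) := by
        rw [Real.mul_rpow (by nlinarith) (Real.rpow_nonneg hz.le _), ← Real.rpow_mul hz.le,
          ← Real.rpow_mul hz.le, Real.rpow_add hz]
        ring
    _ = (-α * h) ^ θ * z ^ (α - θ) := by ring_nf

lemma antitoneOn_rpow_sub_sub_rpow_sub {a b : ℝ} (hα : α < 0) (hab : a ≤ b) :
    AntitoneOn (fun s : ℝ => (b - s) ^ α - (a - s) ^ α) (Iio a) := by
  intro s hs s' hs' hss'
  have key := antitoneOn_rpow_sub_rpow_add hα (sub_nonneg.mpr hab)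
    (sub_pos.mpr (mem_Iio.mp hs')) (sub_pos.mpr (mem_Iio.mp hs)) (by linarith : a - s' ≤ a - s)
  simp only [show ∀ x, a - x + (b - a) = b - x from fun x => by ring] at key
  linarith

lemma monotoneOn_sub_rpow {b : ℝ} (hα : α ≤ 0) : MonotoneOn (fun s : ℝ => (b - s) ^ α) (Iio b) :=
  fun _ _ _ hs' hss' => Real.rpow_le_rpow_of_nonpos (sub_pos.mpr hs') (by linarith) hα

end Kernel

noncomputable def kernelConst (α β : ℝ) : ℝ := 10 * 2 ^ (-α) * dyadicFactor (α + β)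

noncomputable def kernelDiffConst (α β : ℝ) : ℝ :=
  5 * (-α) ^ (2 * α + β) * (2 ^ (-α) * dyadicFactor (α + β) + 2 ^ (α + β) * dyadicFactor (-α))

section Regions

variable {f : ℝ → ℝ} {K α β T : ℝ}

lemma fineSumBound_kernel_right (hf : HolderOnIcc f K β T) (hK : 0 ≤ K) (hα : α < 0)
    (hαβ : 0 < α + β) {b c w : ℝ} (hbT : b ≤ T) (hw : 0 < w) (hwc : w < b - c) (hc : 0 < c) :
    FineSumBound f (fun s => s ^ α * (b - s) ^ α) w (b - c)
      (5 * K * w ^ α * 2 ^ (-α) * dyadicFactor (α + β) * (b - w) ^ (α + β)) := by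
  have hsub : Ico w b ⊆ Ioi 0 := fun s hs => hw.trans_le hs.1
  have H := fineSumBound_singular_right (p := b) (d := b - w) (e := α) (A := 1) (v := b - c)
    (ψ₁ := fun s => s ^ α) (ψ₂ := fun s => (b - s) ^ α) hf hK (by linarith) hα.le hαβ
    (by linarith) hbT zero_le_one
    (by
      rw [sub_sub_cancel]
      exact .inr ((Real.antitoneOn_rpow_Ioi_of_exponent_nonpos hα.le).mono hsub))
    (by rw [sub_sub_cancel]; exact .inl ((monotoneOn_sub_rpow hα.le).mono fun s hs => hs.2))
    (by
      rw [sub_sub_cancel]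
      intro s hs
      rw [abs_of_nonneg (Real.rpow_nonneg (hw.le.trans hs.1) _)]
      exact Real.rpow_le_rpow_of_nonpos hw hs.1 hα.le)
    (fun s hs => by rw [one_mul, abs_of_nonneg (Real.rpow_nonneg (by linarith [hs.2]) _)])
    (by linarith) (by linarith)
  rw [sub_sub_cancel] at H
  exact H.mono (le_of_eq (by ring))

lemma fineSumBound_kernel_left (hf : HolderOnIcc f K β T) (hK : 0 ≤ K) (hα : α < 0)
    (hαβ : 0 < α + β) {b u : ℝ} (hbT : b ≤ T) (hu : 0 < u) (hub : u < b / 2) :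
    FineSumBound f (fun s => s ^ α * (b - s) ^ α) u (b / 2)
      (5 * K * (b / 2) ^ α * 2 ^ (-α) * dyadicFactor (α + β) * (b / 2) ^ (α + β)) := by
  have H := fineSumBound_singular_left (p := 0) (d := b / 2) (e := α) (A := 1) (M := (b / 2) ^ α)
    (ψ₁ := fun s => s ^ α) (ψ₂ := fun s => (b - s) ^ α) hf hK (by linarith) hα.le hαβ le_rfl
    (by linarith) zero_le_one
    (.inr ((Real.antitoneOn_rpow_Ioi_of_exponent_nonpos hα.le).mono fun s hs => hs.1))
    (.inl ((monotoneOn_sub_rpow hα.le).mono fun s hs => by simp only [mem_Iio]; linarith [hs.2]))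
    (fun s hs => by rw [one_mul, sub_zero, abs_of_nonneg (Real.rpow_nonneg hs.1.le _)])
    (by
      intro s hs
      rw [abs_of_nonneg (Real.rpow_nonneg (by linarith [hs.2]) _)]
      exact Real.rpow_le_rpow_of_nonpos (by linarith) (by linarith [hs.2]) hα.le)
    hu (by linarith)
  rw [zero_add] at H
  exact H.mono (le_of_eq (by ring))

lemma fineSumBound_kernel (hf : HolderOnIcc f K β T) (hK : 0 ≤ K) (hα : α < 0)
    (hθ : 0 < 2 * α + β) {b c u : ℝ} (hbT : b ≤ T) (hu : 0 < u) (huc : u < b - c) (hc : 0 < c)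
    (hcb : c < b / 2) :
    FineSumBound f (fun s => s ^ α * (b - s) ^ α) u (b - c)
      (kernelConst α β * K * (b - u) ^ (2 * α + β)) := by
  have hαβ : 0 < α + β := by linarith
  have hcg := (dyadicFactor_pos hαβ).le
  have hbu : 0 < b - u := by linarith
  have hpow : ∀ x : ℝ, 0 < x → x ^ α * x ^ (α + β) = x ^ (2 * α + β) := fun x hx => by
    rw [← Real.rpow_add hx]; ring_nf
  rcases lt_or_ge u (b / 2) with hub | hub
  · refine ((fineSumBound_kernel_left hf hK hα hαβ hbT hu hub).append
      (fineSumBound_kernel_right hf hK hα hαβ hbT (by linarith) (by linarith) hc)).mono ?_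
    rw [show b - b / 2 = b / 2 by ring]
    have hhalf : (b / 2) ^ (2 * α + β) ≤ (b - u) ^ (2 * α + β) :=
      Real.rpow_le_rpow (by linarith) (by linarith) hθ.le
    calc _ = kernelConst α β * K * (b / 2) ^ (2 * α + β) := by
          rw [kernelConst, ← hpow _ (by linarith)]; ring
      _ ≤ _ := by unfold kernelConst; gcongr
  · refine (fineSumBound_kernel_right hf hK hα hαβ hbT hu huc hc).mono ?_
    have hα' : u ^ α ≤ (b - u) ^ α := Real.rpow_le_rpow_of_nonpos (by linarith) (by linarith) hα.le
    calc _ ≤ 5 * K * (b - u) ^ α * 2 ^ (-α) * dyadicFactor (α + β) * (b - u) ^ (α + β) := by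
          gcongr
      _ = kernelConst α β * K * (b - u) ^ (2 * α + β) / 2 := by
          rw [kernelConst, ← hpow _ hbu]; ring
      _ ≤ _ := by
          have : 0 ≤ kernelConst α β * K * (b - u) ^ (2 * α + β) := by
            unfold kernelConst; positivity
          linarith

lemma rpow_neg_mul_rpow_self {x : ℝ} (hx : 0 < x) (γ : ℝ) : x ^ (-γ) * x ^ γ = 1 := by
  rw [← Real.rpow_add hx, neg_add_cancel, Real.rpow_zero]

lemma abs_kernelDiff_le (hα : α < 0) (hθ : 0 < 2 * α + β) (hθ1 : 2 * α + β ≤ 1) {a b s : ℝ}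
    (hab : a ≤ b) (hsa : s < a) :
    |(b - s) ^ α - (a - s) ^ α| ≤ (-α * (b - a)) ^ (2 * α + β) * (a - s) ^ (-(α + β)) := by
  simpa only [show α - (2 * α + β) = -(α + β) by ring] using
    abs_rpow_sub_rpow_le hα hθ.le hθ1 hsa hab

lemma fineSumBound_kernelDiff_left (hf : HolderOnIcc f K β T) (hK : 0 ≤ K) (hα : α < 0)
    (hθ : 0 < 2 * α + β) (hθ1 : 2 * α + β ≤ 1) {a b c : ℝ} (hab : a < b) (hbT : b ≤ T)
    (hc : 0 < c) (hca : c < a / 2) :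
    FineSumBound f (fun s => s ^ α * ((b - s) ^ α - (a - s) ^ α)) c (a / 2)
      (5 * K * (-α * (b - a)) ^ (2 * α + β) * 2 ^ (-α) * dyadicFactor (α + β)) := by
  have hΛ : 0 ≤ (-α * (b - a)) ^ (2 * α + β) := Real.rpow_nonneg (by nlinarith) _
  have H := fineSumBound_singular_left (p := 0) (d := a / 2) (e := α) (A := 1)
    (M := (-α * (b - a)) ^ (2 * α + β) * (a / 2) ^ (-(α + β))) (u := c)
    (ψ₁ := fun s => s ^ α) (ψ₂ := fun s => (b - s) ^ α - (a - s) ^ α)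
    hf hK (by linarith) hα.le (by linarith) le_rfl (by linarith) zero_le_one
    (.inr ((Real.antitoneOn_rpow_Ioi_of_exponent_nonpos hα.le).mono fun s hs => hs.1))
    (.inr ((antitoneOn_rpow_sub_sub_rpow_sub hα hab.le).mono fun s hs => by
      simp only [mem_Iio]; linarith [hs.2]))
    (fun s hs => by rw [one_mul, sub_zero, abs_of_nonneg (Real.rpow_nonneg hs.1.le _)])
    (fun s hs => (abs_kernelDiff_le hα hθ hθ1 hab.le (by linarith [hs.2])).trans
      (mul_le_mul_of_nonneg_left
        (Real.rpow_le_rpow_of_nonpos (by linarith) (by linarith [hs.2]) (by linarith)) hΛ))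
    hc (by linarith)
  rw [zero_add] at H
  refine H.mono (le_of_eq ?_)
  linear_combination (5 * K * (-α * (b - a)) ^ (2 * α + β) * 2 ^ (-α) * dyadicFactor (α + β)) *
    rpow_neg_mul_rpow_self (by linarith : 0 < a / 2) (α + β)

lemma fineSumBound_kernelDiff_right (hf : HolderOnIcc f K β T) (hK : 0 ≤ K) (hα : α < 0)
    (hθ : 0 < 2 * α + β) (hθ1 : 2 * α + β ≤ 1) {a b c : ℝ} (hab : a < b) (hbT : b ≤ T)
    (hc : 0 < c) (hca : c < a / 2) :
    FineSumBound f (fun s => s ^ α * ((b - s) ^ α - (a - s) ^ α)) (a / 2) (a - c)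
      (5 * K * (-α * (b - a)) ^ (2 * α + β) * 2 ^ (α + β) * dyadicFactor (-α)) := by
  have H := fineSumBound_singular_right (p := a) (d := a / 2) (e := -(α + β))
    (A := (-α * (b - a)) ^ (2 * α + β)) (M := (a / 2) ^ α) (v := a - c)
    (ψ₁ := fun s => s ^ α) (ψ₂ := fun s => (b - s) ^ α - (a - s) ^ α)
    hf hK (by linarith) (by linarith) (by linarith) (by linarith) (by linarith)
    (Real.rpow_nonneg (by nlinarith) _)
    (.inr ((Real.antitoneOn_rpow_Ioi_of_exponent_nonpos hα.le).mono fun s hs => by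
      simp only [mem_Ioi]; linarith [hs.1]))
    (.inr ((antitoneOn_rpow_sub_sub_rpow_sub hα hab.le).mono fun s hs => hs.2))
    (fun s hs => by
      rw [abs_of_nonneg (Real.rpow_nonneg (by linarith [hs.1]) _)]
      exact Real.rpow_le_rpow_of_nonpos (by linarith) (by linarith [hs.1]) hα.le)
    (fun s hs => abs_kernelDiff_le hα hθ hθ1 hab.le hs.2) (by linarith) (by linarith)
  rw [show a - a / 2 = a / 2 by ring, show -(α + β) + β = -α by ring, neg_neg] at H
  refine H.mono (le_of_eq ?_)
  have hcancel := rpow_neg_mul_rpow_self (by linarith : 0 < a / 2) (-α)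
  rw [neg_neg] at hcancel
  linear_combination (5 * K * (-α * (b - a)) ^ (2 * α + β) * 2 ^ (α + β) * dyadicFactor (-α)) *
    hcancel

lemma fineSumBound_kernel_sub (hf : HolderOnIcc f K β T) (hK : 0 ≤ K) (hα : α < 0)
    (hθ : 0 < 2 * α + β) (hθ1 : 2 * α + β ≤ 1) {a b c : ℝ} (hab : a < b) (hbT : b ≤ T)
    (hc : 0 < c) (hca : c < a / 2) :
    FineSumBound f ((fun s => s ^ α * (b - s) ^ α) - fun s => s ^ α * (a - s) ^ α) c (a - c)
      (kernelDiffConst α β * K * (b - a) ^ (2 * α + β)) := by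
  have hkernel : ((fun s => s ^ α * (b - s) ^ α) - fun s => s ^ α * (a - s) ^ α) =
      fun s => s ^ α * ((b - s) ^ α - (a - s) ^ α) := by
    funext s; simp only [Pi.sub_apply]; ring
  rw [hkernel]
  refine ((fineSumBound_kernelDiff_left hf hK hα hθ hθ1 hab hbT hc hca).append
    (fineSumBound_kernelDiff_right hf hK hα hθ hθ1 hab hbT hc hca)).mono (le_of_eq ?_)
  rw [kernelDiffConst, Real.mul_rpow (by linarith) (by linarith)]
  ring

end Regions

lemma kernelConst_pos {α β : ℝ} (hαβ : 0 < α + β) : 0 < kernelConst α β := by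
  have := dyadicFactor_pos hαβ
  unfold kernelConst; positivity

lemma kernelDiffConst_nonneg {α β : ℝ} (hα : α < 0) (hαβ : 0 < α + β) :
    0 ≤ kernelDiffConst α β := by
  have := dyadicFactor_pos hαβ
  have := dyadicFactor_pos (neg_pos.mpr hα)
  have := Real.rpow_nonneg (neg_nonneg.mpr hα.le) (2 * α + β)
  unfold kernelDiffConst; positivity

section Integrals

variable {f : ℝ → ℝ} {K α β T : ℝ}

lemma abs_le_of_rsIntegral_kernel (hf : HolderOnIcc f K β T) (hK : 0 ≤ K) (hα : α < 0)
    (hθ : 0 < 2 * α + β) {b c I : ℝ} (hbT : b ≤ T) (hc : 0 < c) (hcb : 2 * c < b)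
    (hI : RSIntegral (fun s => s ^ α * (b - s) ^ α) f c (b - c) I) :
    |I| ≤ kernelConst α β * K * b ^ (2 * α + β) := by
  have := kernelConst_pos (α := α) (β := β) (by linarith)
  refine hI.abs_le_of_fineSumBound ((fineSumBound_kernel hf hK hα hθ hbT hc (by linarith) hc
    (by linarith)).mono ?_)
  gcongr <;> linarith

lemma abs_sub_le_of_rsIntegral_kernel (hf : HolderOnIcc f K β T) (hK : 0 ≤ K) (hα : α < 0)
    (hθ : 0 < 2 * α + β) (hθ1 : 2 * α + β ≤ 1) {a b c I J : ℝ} (hab : a < b) (hbT : b ≤ T)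
    (hc : 0 < c) (hca : 2 * c < a) (hcba : c ≤ b - a)
    (hI : RSIntegral (fun s => s ^ α * (b - s) ^ α) f c (b - c) I)
    (hJ : RSIntegral (fun s => s ^ α * (a - s) ^ α) f c (a - c) J) :
    |I - J| ≤ (kernelDiffConst α β + 2 ^ (2 * α + β) * kernelConst α β) * K *
      (b - a) ^ (2 * α + β) := by
  have := kernelConst_pos (α := α) (β := β) (by linarith)
  refine (hI.abs_sub_le_of_fineSumBound hJ
    (fineSumBound_kernel_sub hf hK hα hθ hθ1 hab hbT hc (by linarith))
    (fineSumBound_kernel hf hK hα hθ hbT (by linarith) (by linarith) hc (by linarith))).trans ?_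
  have hgap : (b - (a - c)) ^ (2 * α + β) ≤ 2 ^ (2 * α + β) * (b - a) ^ (2 * α + β) := by
    rw [← Real.mul_rpow (by norm_num) (by linarith)]
    exact Real.rpow_le_rpow (by linarith) (by linarith) hθ.le
  calc _ ≤ kernelDiffConst α β * K * (b - a) ^ (2 * α + β) +
        kernelConst α β * K * (2 ^ (2 * α + β) * (b - a) ^ (2 * α + β)) := by gcongr
    _ = _ := by ring

end Integrals

end StieltjesHolder

open StieltjesHolder

theorem stmt7_general (T β α K : ℝ) (f g : ℝ → ℝ) (G : ℝ → ℝ → ℝ)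
    (hα : α ∈ Set.Ioo (-(1/2) : ℝ) 0)
    (h2αβ : 0 < 2 * α + β) (h2αβ1 : 2 * α + β ≤ 1)
    (hK : 0 ≤ K)
    (hf : ∀ x ∈ Set.Icc (0:ℝ) T, ∀ y ∈ Set.Icc (0:ℝ) T, |f x - f y| ≤ K * |x - y| ^ β)
    (hg0 : g 0 = 0)
    (hG : ∀ t ∈ Set.Ioc (0:ℝ) T, ∀ c : ℝ, 0 < c → 2 * c < t →
      RSIntegral (fun s => s ^ α * (t - s) ^ α) f c (t - c) (G t c))
    (hg : ∀ t ∈ Set.Ioc (0:ℝ) T,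
      Filter.Tendsto (fun c => G t c) (nhdsWithin 0 (Set.Ioi 0)) (nhds (g t))) :
    ∃ C > (0:ℝ), ∀ a b : ℝ, 0 ≤ a → a < b → b ≤ T →
      |g b - g a| ≤ C * K * (b - a) ^ (2 * α + β) := by
  have hα0 : α < 0 := hα.2
  have hK₀ := kernelConst_pos (α := α) (β := β) (by linarith)
  have hK₁ := kernelDiffConst_nonneg (β := β) hα0 (by linarith)
  have h2θ : (1 : ℝ) ≤ 2 ^ (2 * α + β) := Real.one_le_rpow (by norm_num) h2αβ.le
  refine ⟨kernelDiffConst α β + 2 ^ (2 * α + β) * kernelConst α β, by positivity,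
    fun a b ha hab hbT => ?_⟩
  have hb : b ∈ Ioc 0 T := ⟨ha.trans_lt hab, hbT⟩
  rcases ha.eq_or_lt with rfl | ha
  · rw [hg0, sub_zero, sub_zero]
    refine le_of_tendsto (hg b hb).abs ?_
    filter_upwards [Ioo_mem_nhdsGT (half_pos hb.1)] with c ⟨hc, hcb⟩
    refine (abs_le_of_rsIntegral_kernel hf hK hα0 h2αβ hbT hc (by linarith)
      (hG b hb c hc (by linarith))).trans ?_
    gcongr
    nlinarith
  · have ha' : a ∈ Ioc 0 T := ⟨ha, hab.le.trans hbT⟩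
    refine le_of_tendsto ((hg b hb).sub (hg a ha')).abs ?_
    filter_upwards [Ioo_mem_nhdsGT (lt_min (half_pos ha) (sub_pos.mpr hab))] with c ⟨hc, hcab⟩
    rw [lt_min_iff] at hcab
    exact abs_sub_le_of_rsIntegral_kernel hf hK hα0 h2αβ h2αβ1 hab hbT hc (by linarith)
      hcab.2.le (hG b hb c hc (by linarith)) (hG a ha' c hc (by linarith))

/-- Proposition A.6(2) of the paper: for `α ∈ (-1/2,0)`, `β ∈ (0,1]` with
`0 < 2α + β ≤ 1`, `f` `β`-Hölder on `[0,T]` with constant `K`, and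
`g(t) = ∫₀^t s^α (t-s)^α df(s)` (improper Riemann–Stieltjes integral, limit of
`∫_c^{t-c}` as `c → 0⁺`), one has `|g(b) - g(a)| ≤ C K (b-a)^{2α+β}`
for all `0 ≤ a < b ≤ T`, i.e. `g ∈ C^{2α+β}([0,T])`. -/
theorem stmt7 (T β α K : ℝ) (f g : ℝ → ℝ) (G : ℝ → ℝ → ℝ)
    (hα : α ∈ Set.Ioo (-(1/2) : ℝ) 0) (hβ : 0 < β) (hβ1 : β ≤ 1)
    (h2αβ : 0 < 2 * α + β) (h2αβ1 : 2 * α + β ≤ 1)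
    (hT : 0 < T) (hK : 0 ≤ K)
    (hf : ∀ x ∈ Set.Icc (0:ℝ) T, ∀ y ∈ Set.Icc (0:ℝ) T, |f x - f y| ≤ K * |x - y| ^ β)
    (hg0 : g 0 = 0)
    (hG : ∀ t ∈ Set.Ioc (0:ℝ) T, ∀ c : ℝ, 0 < c → 2 * c < t →
      RSIntegral (fun s => s ^ α * (t - s) ^ α) f c (t - c) (G t c))
    (hg : ∀ t ∈ Set.Ioc (0:ℝ) T,
      Filter.Tendsto (fun c => G t c) (nhdsWithin 0 (Set.Ioi 0)) (nhds (g t))) :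
    ∃ C > (0:ℝ), ∀ a b : ℝ, 0 ≤ a → a < b → b ≤ T →
      |g b - g a| ≤ C * K * (b - a) ^ (2 * α + β) :=
  stmt7_general T β α K f g G hα h2αβ h2αβ1 hK hf hg0 hG hg
end

section
/- Let ν be a finite nonzero Borel measure on [0,t] singular with respect to Lebesgue measure, let α ∈ (0, 1/4) and β = 2/(1+2α). Then lim_{n→∞} ∑_{i=1}^n (∫₀^{t_i^n} ((t_i^n - s)^α - (t_{i-1}^n - s)₊^α)² dν(s))^{β/2} = 0, where t_i^n = it/n. -/
/-!
On the cell `I_j = (jt/n, (j+1)t/n]` with `j ≤ i` the integrand is at most `(t/n)^{2α} c_{i-j}²`,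
where `c_0 = 1` and `c_m = m^α - (m-1)^α ≤ m^{α-1}` by concavity of `x ↦ x^α`. As `x ↦ x^{β/2}` is
subadditive and `αβ = 1 - β/2`, the sum is at most `(∑_m c_m^β) · (t/n)^{1-β/2} ∑_j ν(I_j)^{β/2}`,
and the series converges because `(1-α)β > 1`, which is exactly `α < 1/4`.

The second factor tends to `0` because `ν` is singular: up to mass `δ`, `ν` lives on a compact
Lebesgue-null set `K`. By Hölder's inequality the cells meeting `K` contribute at most
`(their total length)^{1-β/2} ν(ℝ)^{β/2}`, and that length is small because for large `n` these
cells lie in an open neighbourhood of `K` of small measure; the other cells contribute at most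
`t^{1-β/2} δ^{β/2}`.
-/

open MeasureTheory Filter Set
open scoped ENNReal Topology

theorem ConcaveOn.add_sub_le_add_sub_of_le {s : Set ℝ} {f : ℝ → ℝ} (hf : ConcaveOn ℝ s f)
    {x y h : ℝ} (hy : y ∈ s) (hxh : x + h ∈ s) (hh : 0 ≤ h) (hyx : y ≤ x) :
    f (x + h) - f x ≤ f (y + h) - f y := by
  rcases hyx.eq_or_lt with rfl | hyx
  · exact le_rfl
  have hd : 0 < x + h - y := by linarith
  set lam := h / (x + h - y)
  have hl0 : 0 ≤ lam := by positivity
  have hl1 : lam ≤ 1 := by rw [div_le_one hd]; linarith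
  have hk : lam * (x + h - y) = h := div_mul_cancel₀ h hd.ne'
  have c1 := hf.2 hy hxh hl0 (sub_nonneg.2 hl1) (add_sub_cancel lam 1)
  have c2 := hf.2 hy hxh (sub_nonneg.2 hl1) hl0 (sub_add_cancel 1 lam)
  have e1 : lam • y + (1 - lam) • (x + h) = x := by
    simp only [smul_eq_mul]; linear_combination -hk
  have e2 : (1 - lam) • y + lam • (x + h) = y + h := by
    simp only [smul_eq_mul]; linear_combination hk
  rw [e1] at c1
  rw [e2] at c2
  simp only [smul_eq_mul] at c1 c2
  linear_combination c1 + c2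

theorem Real.rpow_sub_rpow_sub_one_le {α x : ℝ} (hα : α ≤ 1) (hx : 1 ≤ x) :
    x ^ α - (x - 1) ^ α ≤ x ^ (α - 1) := by
  have hx0 : 0 < x := by linarith
  have key : (x - 1) / x ≤ ((x - 1) / x) ^ α :=
    Real.self_le_rpow_of_le_one (by positivity) (div_le_one_of_le₀ (by linarith) hx0.le) hα
  rw [Real.div_rpow (by linarith) hx0.le, le_div_iff₀ (Real.rpow_pos_of_pos hx0 α)] at key
  rw [Real.rpow_sub_one hx0.ne']
  have : (x - 1) / x * x ^ α = x ^ α - x ^ α / x := by field_simp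
  linarith

noncomputable def powIncrement (α : ℝ) (m : ℕ) : ℝ :=
  if m = 0 then 1 else (m : ℝ) ^ α - ((m : ℝ) - 1) ^ α

theorem powIncrement_nonneg {α : ℝ} (hα : 0 ≤ α) (m : ℕ) : 0 ≤ powIncrement α m := by
  unfold powIncrement
  split_ifs with hm
  · exact zero_le_one
  · have hm1 : (1 : ℝ) ≤ m := Nat.one_le_cast.2 (Nat.pos_of_ne_zero hm)
    exact sub_nonneg.2 (Real.rpow_le_rpow (by linarith) (by linarith) hα)

theorem powIncrement_le {α : ℝ} (hα : α ≤ 1) {m : ℕ} (hm : m ≠ 0) :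
    powIncrement α m ≤ (m : ℝ) ^ (α - 1) := by
  rw [powIncrement, if_neg hm]
  exact Real.rpow_sub_rpow_sub_one_le hα (Nat.one_le_cast.2 (Nat.pos_of_ne_zero hm))

theorem summable_powIncrement_rpow {α β : ℝ} (hα0 : 0 ≤ α) (hα1 : α ≤ 1)
    (hαβ : 1 < (1 - α) * β) : Summable fun m => powIncrement α m ^ β := by
  have hβ : 0 ≤ β := by nlinarith
  rw [← summable_nat_add_iff 1]
  refine Summable.of_nonneg_of_le (fun m => Real.rpow_nonneg (powIncrement_nonneg hα0 _) _)
    (fun m => ?_) ((summable_nat_add_iff 1).2 (Real.summable_nat_rpow.2 (by linarith :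
      (α - 1) * β < -1)))
  calc powIncrement α (m + 1) ^ β ≤ (((m + 1 : ℕ) : ℝ) ^ (α - 1)) ^ β :=
        Real.rpow_le_rpow (powIncrement_nonneg hα0 _) (powIncrement_le hα1 m.succ_ne_zero) hβ
    _ = ((m + 1 : ℕ) : ℝ) ^ ((α - 1) * β) := (Real.rpow_mul (Nat.cast_nonneg _) _ _).symm

theorem rpow_sub_rpow_max_le {α h u : ℝ} (hα0 : 0 < α) (hα1 : α ≤ 1) (hh : 0 ≤ h) (m : ℕ)
    (hmu : m * h ≤ u) (hum : u ≤ (m + 1) * h) :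
    u ^ α - (max (u - h) 0) ^ α ≤ h ^ α * powIncrement α m := by
  rcases eq_or_ne m 0 with rfl | hm
  · simp only [Nat.cast_zero, zero_mul, zero_add, one_mul] at hmu hum
    rw [max_eq_right (by linarith), Real.zero_rpow hα0.ne', sub_zero, powIncrement, if_pos rfl,
      mul_one]
    exact Real.rpow_le_rpow hmu hum hα0.le
  · have hm1 : (1 : ℝ) ≤ m := Nat.one_le_cast.2 (Nat.pos_of_ne_zero hm)
    have hy : 0 ≤ ((m : ℝ) - 1) * h := mul_nonneg (by linarith) hh
    have hyx : ((m : ℝ) - 1) * h ≤ u - h := by linarith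
    have hconc := (Real.concaveOn_rpow hα0.le hα1).add_sub_le_add_sub_of_le (mem_Ici.2 hy)
      (mem_Ici.2 (by linarith : (0 : ℝ) ≤ u - h + h)) hh hyx
    rw [max_eq_left (hy.trans hyx), powIncrement, if_neg hm, mul_sub,
      ← Real.mul_rpow hh (by linarith), ← Real.mul_rpow hh (by linarith)]
    calc u ^ α - (u - h) ^ α = (u - h + h) ^ α - (u - h) ^ α := by rw [sub_add_cancel]
      _ ≤ (((m : ℝ) - 1) * h + h) ^ α - (((m : ℝ) - 1) * h) ^ α := hconc
      _ = (h * m) ^ α - (h * (m - 1)) ^ α := by ring_nf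

theorem sq_rpow_mul_rpow_half {α β h c : ℝ} (hh : 0 ≤ h) (hc : 0 ≤ c) :
    ((h ^ α * c) ^ 2) ^ (β / 2) = h ^ (α * β) * c ^ β := by
  have hb : 0 ≤ h ^ α * c := by positivity
  rw [← Real.rpow_natCast, ← Real.rpow_mul hb, Nat.cast_ofNat, mul_div_cancel₀ β two_ne_zero,
    Real.mul_rpow (by positivity) hc, ← Real.rpow_mul hh]

theorem ENNReal.rpow_sum_le_sum_rpow {ι : Type*} (s : Finset ι) (a : ι → ℝ≥0∞) {p : ℝ}
    (hp0 : 0 < p) (hp1 : p ≤ 1) : (∑ i ∈ s, a i) ^ p ≤ ∑ i ∈ s, a i ^ p := by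
  classical
  induction s using Finset.induction_on with
  | empty => simp [ENNReal.zero_rpow_of_pos hp0]
  | insert j s hj ih =>
    rw [Finset.sum_insert hj, Finset.sum_insert hj]
    exact (ENNReal.rpow_add_le_add_rpow _ _ hp0.le hp1).trans (by gcongr)

theorem ENNReal.sum_rpow_le_card_rpow_mul_rpow_sum {ι : Type*} (s : Finset ι) (a : ι → ℝ≥0∞)
    {p : ℝ} (hp0 : 0 < p) (hp1 : p ≤ 1) :
    ∑ i ∈ s, a i ^ p ≤ (s.card : ℝ≥0∞) ^ (1 - p) * (∑ i ∈ s, a i) ^ p := by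
  have h := ENNReal.rpow_sum_le_const_mul_sum_rpow s (fun i => a i ^ p)
    ((one_le_div hp0).2 hp1)
  simp only [← ENNReal.rpow_mul, mul_one_div_cancel hp0.ne', ENNReal.rpow_one] at h
  calc ∑ i ∈ s, a i ^ p = ((∑ i ∈ s, a i ^ p) ^ (1 / p)) ^ p := by
        rw [← ENNReal.rpow_mul, one_div_mul_cancel hp0.ne', ENNReal.rpow_one]
    _ ≤ ((s.card : ℝ≥0∞) ^ (1 / p - 1) * ∑ i ∈ s, a i) ^ p := ENNReal.rpow_le_rpow h hp0.le
    _ = (s.card : ℝ≥0∞) ^ (1 - p) * (∑ i ∈ s, a i) ^ p := by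
        rw [ENNReal.mul_rpow_of_nonneg _ _ hp0.le, ← ENNReal.rpow_mul, sub_mul,
          one_div_mul_cancel hp0.ne', one_mul]

theorem ENNReal.sum_range_sum_range_succ_mul_le (a b : ℕ → ℝ≥0∞) (n : ℕ) :
    ∑ i ∈ Finset.range n, ∑ j ∈ Finset.range (i + 1), a j * b (i - j) ≤
      (∑ j ∈ Finset.range n, a j) * ∑' m, b m := by
  simp only [Finset.range_eq_Ico]
  rw [← Finset.sum_Ico_Ico_comm, Finset.sum_mul]
  refine Finset.sum_le_sum fun j _ => ?_
  rw [← Finset.mul_sum, Finset.sum_Ico_eq_sum_range]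
  simp only [Nat.add_sub_cancel_left]
  exact mul_le_mul_right (ENNReal.sum_le_tsum _) _

def gridCell (t : ℝ) (n j : ℕ) : Set ℝ := Ioc (j * t / n) ((j + 1) * t / n)

theorem measurableSet_gridCell (t : ℝ) (n j : ℕ) : MeasurableSet (gridCell t n j) :=
  measurableSet_Ioc

theorem volume_gridCell (t : ℝ) (n j : ℕ) : volume (gridCell t n j) = ENNReal.ofReal (t / n) := by
  rw [gridCell, Real.volume_Ioc]
  ring_nf

theorem pairwise_disjoint_gridCell {t : ℝ} (ht : 0 ≤ t) (n : ℕ) :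
    Pairwise (Function.onFun Disjoint (gridCell t n)) := by
  have hmono : Monotone fun j : ℕ => (j : ℝ) * t / n := fun i j hij => by
    dsimp only; gcongr
  intro i j hij
  simpa [gridCell, Function.onFun] using hmono.pairwise_disjoint_on_Ioc_succ hij

theorem Ioc_zero_subset_biUnion_gridCell (t : ℝ) (n i : ℕ) :
    Ioc 0 ((i + 1) * t / n) ⊆ ⋃ j ∈ Finset.range (i + 1), gridCell t n j := by
  simpa [gridCell] using Ioc_subset_biUnion_Ioc (i + 1) fun j : ℕ => (j : ℝ) * t / n

open Classical in
theorem eventually_card_gridCell_inter_mul_le {t : ℝ} (ht : 0 ≤ t) {K U : Set ℝ}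
    (hK : IsCompact K) (hU : IsOpen U) (hKU : K ⊆ U) :
    ∀ᶠ n : ℕ in atTop, ((Finset.range n).filter fun j => (gridCell t n j ∩ K).Nonempty).card *
      ENNReal.ofReal (t / n) ≤ volume U := by
  obtain ⟨d, hd, hdU⟩ := hK.exists_thickening_subset_open hU hKU
  filter_upwards [(tendsto_const_div_atTop_nhds_zero_nat t).eventually_lt_const hd] with n hn
  set A := (Finset.range n).filter fun j => (gridCell t n j ∩ K).Nonempty
  have hAU : ∀ j ∈ A, gridCell t n j ⊆ U := by
    intro j hj x hx
    obtain ⟨y, hy, hyK⟩ := (Finset.mem_filter.1 hj).2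
    refine hdU (Metric.mem_thickening_iff.2 ⟨y, hyK, ?_⟩)
    calc dist x y ≤ (j + 1) * t / n - j * t / n :=
          Real.dist_le_of_mem_Icc (Ioc_subset_Icc_self hx) (Ioc_subset_Icc_self hy)
      _ = t / n := by ring
      _ < d := hn
  calc (A.card : ℝ≥0∞) * ENNReal.ofReal (t / n) = ∑ j ∈ A, volume (gridCell t n j) := by
        simp [volume_gridCell]
    _ = volume (⋃ j ∈ A, gridCell t n j) :=
        (measure_biUnion_finset ((pairwise_disjoint_gridCell ht n).set_pairwise _)
          fun j _ => measurableSet_gridCell t n j).symm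
    _ ≤ volume U := measure_mono (iUnion₂_subset hAU)

open Classical in
theorem sum_measure_rpow_le_of_pairwiseDisjoint {X ι : Type*} [MeasurableSpace X]
    (ν : Measure X) (s : Finset ι) {I : ι → Set X} (hdisj : (s : Set ι).PairwiseDisjoint I)
    (hI : ∀ j ∈ s, MeasurableSet (I j)) (K : Set X) {p : ℝ} (hp0 : 0 < p) (hp1 : p ≤ 1) :
    ∑ j ∈ s, ν (I j) ^ p ≤
      ((s.filter fun j => (I j ∩ K).Nonempty).card : ℝ≥0∞) ^ (1 - p) * ν univ ^ p +
        (s.card : ℝ≥0∞) ^ (1 - p) * ν Kᶜ ^ p := by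
  have hsum_le : ∀ t ⊆ s, ∀ S, (∀ j ∈ t, I j ⊆ S) → ∑ j ∈ t, ν (I j) ≤ ν S := fun t hts S htS => by
    rw [← measure_biUnion_finset (hdisj.subset (Finset.coe_subset.2 hts)) fun j hj => hI j (hts hj)]
    exact measure_mono (iUnion₂_subset htS)
  rw [← Finset.sum_filter_add_sum_filter_not s fun j => (I j ∩ K).Nonempty]
  gcongr ?_ + ?_
  · refine (ENNReal.sum_rpow_le_card_rpow_mul_rpow_sum _ _ hp0 hp1).trans ?_
    gcongr
    exact hsum_le _ (Finset.filter_subset _ _) _ fun j _ => subset_univ _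
  · refine (ENNReal.sum_rpow_le_card_rpow_mul_rpow_sum _ _ hp0 hp1).trans ?_
    gcongr
    · exact Finset.filter_subset _ s
    · refine hsum_le _ (Finset.filter_subset _ _) _ fun j hj x hx hxK => ?_
      exact (Finset.mem_filter.1 hj).2 ⟨x, hx, hxK⟩

theorem MeasureTheory.Measure.MutuallySingular.exists_isCompact_null_measure_compl_lt
    {X : Type*} [TopologicalSpace X] [MeasurableSpace X] [OpensMeasurableSpace X] [T2Space X]
    {μ ν : Measure X} [IsFiniteMeasure ν] [ν.InnerRegularCompactLTTop] (h : ν ⟂ₘ μ)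
    {δ : ℝ≥0∞} (hδ : 0 < δ) : ∃ K, IsCompact K ∧ μ K = 0 ∧ ν Kᶜ < δ := by
  obtain ⟨S, hS, hνS, hμS⟩ := h
  obtain ⟨K, hKS, hK, hνK⟩ := hS.compl.exists_isCompact_sdiff_lt (measure_ne_top ν _) hδ.ne'
  refine ⟨K, hK, measure_mono_null hKS hμS, ?_⟩
  calc ν Kᶜ ≤ ν (S ∪ Sᶜ \ K) := measure_mono fun x hx => by by_cases x ∈ S <;> simp_all
    _ ≤ ν S + ν (Sᶜ \ K) := measure_union_le _ _
    _ < δ := by rwa [hνS, zero_add]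

open Classical in
theorem sum_measure_gridCell_rpow_mul_le (ν : Measure ℝ) {t p : ℝ} (ht : 0 ≤ t) (hp0 : 0 < p)
    (hp1 : p ≤ 1) {n : ℕ} (hn : n ≠ 0) (K : Set ℝ) :
    (∑ j ∈ Finset.range n, ν (gridCell t n j) ^ p) * ENNReal.ofReal (t / n) ^ (1 - p) ≤
      ((((Finset.range n).filter fun j => (gridCell t n j ∩ K).Nonempty).card : ℝ≥0∞) *
          ENNReal.ofReal (t / n)) ^ (1 - p) * ν univ ^ p +
        ENNReal.ofReal t ^ (1 - p) * ν Kᶜ ^ p := by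
  have hq : 0 ≤ 1 - p := sub_nonneg.2 hp1
  have hnt : (n : ℝ≥0∞) * ENNReal.ofReal (t / n) = ENNReal.ofReal t := by
    rw [← ENNReal.ofReal_natCast, ← ENNReal.ofReal_mul (Nat.cast_nonneg n),
      mul_div_cancel₀ t (Nat.cast_ne_zero.2 hn)]
  calc _ ≤ ((((Finset.range n).filter fun j => (gridCell t n j ∩ K).Nonempty).card : ℝ≥0∞) ^
            (1 - p) * ν univ ^ p + (n : ℝ≥0∞) ^ (1 - p) * ν Kᶜ ^ p) *
          ENNReal.ofReal (t / n) ^ (1 - p) := by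
        gcongr
        simpa using sum_measure_rpow_le_of_pairwiseDisjoint ν (Finset.range n)
          ((pairwise_disjoint_gridCell ht n).set_pairwise _)
          (fun j _ => measurableSet_gridCell t n j) K hp0 hp1
    _ = _ := by
        rw [← hnt, ENNReal.mul_rpow_of_nonneg _ _ hq, ENNReal.mul_rpow_of_nonneg _ _ hq]
        ring

theorem tendsto_sum_measure_gridCell_rpow_mul {ν : Measure ℝ} [IsFiniteMeasure ν]
    (hsing : ν ⟂ₘ volume) {t p : ℝ} (ht : 0 < t) (hp0 : 0 < p) (hp1 : p < 1) :
    Tendsto (fun n : ℕ => (∑ j ∈ Finset.range n, ν (gridCell t n j) ^ p) *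
      ENNReal.ofReal (t / n) ^ (1 - p)) atTop (𝓝 0) := by
  have hq : 0 < 1 - p := sub_pos.2 hp1
  rw [ENNReal.tendsto_nhds_zero]
  intro ε hε
  have hε2 : 0 < ε / 2 := ENNReal.half_pos hε.ne'
  have hpow : ∀ {q : ℝ}, 0 < q → Tendsto (fun x : ℝ≥0∞ => x ^ q) (𝓝 0) (𝓝 0) := fun h =>
    ENNReal.continuous_rpow_const.tendsto' 0 0 (ENNReal.zero_rpow_of_pos h)
  have hcompl_term : Tendsto (fun x => ENNReal.ofReal t ^ (1 - p) * x ^ p) (𝓝 0) (𝓝 0) := by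
    simpa only [mul_zero] using ENNReal.Tendsto.const_mul (hpow hp0)
      (Or.inr (ENNReal.rpow_ne_top_of_nonneg hq.le ENNReal.ofReal_ne_top))
  have hnear_term : Tendsto (fun x => x ^ (1 - p) * ν univ ^ p) (𝓝 0) (𝓝 0) := by
    simpa only [zero_mul] using ENNReal.Tendsto.mul_const (hpow hq)
      (Or.inr (ENNReal.rpow_ne_top_of_nonneg hp0.le (measure_ne_top ν univ)))
  obtain ⟨δ, hδ, hδε⟩ :=
    (ENNReal.nhds_zero_basis.tendsto_iff ENNReal.nhds_zero_basis).1 hcompl_term _ hε2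
  obtain ⟨r, hr, hrε⟩ :=
    (ENNReal.nhds_zero_basis.tendsto_iff ENNReal.nhds_zero_basis).1 hnear_term _ hε2
  obtain ⟨K, hK, hK0, hKδ⟩ := hsing.exists_isCompact_null_measure_compl_lt hδ
  obtain ⟨U, hKU, hU, hUr⟩ := Set.exists_isOpen_lt_of_lt K r (hK0 ▸ hr)
  filter_upwards [eventually_card_gridCell_inter_mul_le ht.le hK hU hKU,
    eventually_ne_atTop 0] with n hn hn0
  calc _ ≤ _ := sum_measure_gridCell_rpow_mul_le ν ht.le hp0 hp1.le hn0 K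
    _ ≤ volume U ^ (1 - p) * ν univ ^ p + ENNReal.ofReal t ^ (1 - p) * ν Kᶜ ^ p := by
        gcongr
    _ ≤ ε / 2 + ε / 2 := add_le_add (hrε _ hUr).le (hδε _ hKδ).le
    _ = ε := ENNReal.add_halves ε

theorem sq_rpow_sub_rpow_max_le_of_mem_gridCell {α t : ℝ} (hα0 : 0 < α) (hα1 : α ≤ 1)
    (ht : 0 ≤ t) {n i j : ℕ} (hji : j ≤ i) {s : ℝ} (hs : s ∈ gridCell t n j) :
    ((((i : ℝ) + 1) * t / n - s) ^ α - (max ((i : ℝ) * t / n - s) 0) ^ α) ^ 2 ≤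
      ((t / n) ^ α * powIncrement α (i - j)) ^ 2 := by
  obtain ⟨hs₀, hs₁⟩ := hs
  have hcast : ((i - j : ℕ) : ℝ) = i - j := Nat.cast_sub hji
  have hu₀ : ((i - j : ℕ) : ℝ) * (t / n) ≤ ((i : ℝ) + 1) * t / n - s := by
    rw [hcast]; linarith [show ((i : ℝ) - j) * (t / n) = (i + 1) * t / n - (j + 1) * t / n by ring]
  have hu₁ : ((i : ℝ) + 1) * t / n - s ≤ (((i - j : ℕ) : ℝ) + 1) * (t / n) := by
    rw [hcast]; linarith [show ((i : ℝ) - j + 1) * (t / n) = (i + 1) * t / n - j * t / n by ring]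
  have hshift : (i : ℝ) * t / n - s = ((i : ℝ) + 1) * t / n - s - t / n := by ring
  have hu : 0 ≤ ((i : ℝ) + 1) * t / n - s := le_trans (by positivity) hu₀
  rw [hshift]
  refine pow_le_pow_left₀ (sub_nonneg.2 (Real.rpow_le_rpow (le_max_right _ _)
    (max_le (by linarith [show 0 ≤ t / n by positivity]) hu) hα0.le)) ?_ 2
  exact rpow_sub_rpow_max_le hα0 hα1 (by positivity) (i - j) hu₀ hu₁

theorem lintegral_Ioc_le_sum_gridCell {α t : ℝ} (hα0 : 0 < α) (hα1 : α ≤ 1) (ht : 0 ≤ t)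
    (ν : Measure ℝ) (n i : ℕ) :
    ∫⁻ s in Ioc 0 (((i : ℝ) + 1) * t / n),
        ENNReal.ofReal ((((i + 1) * t / n - s) ^ α - (max (i * t / n - s) 0) ^ α) ^ 2) ∂ν ≤
      ∑ j ∈ Finset.range (i + 1),
        ENNReal.ofReal (((t / n) ^ α * powIncrement α (i - j)) ^ 2) * ν (gridCell t n j) := by
  calc _ ≤ ∫⁻ s in ⋃ j ∈ Finset.range (i + 1), gridCell t n j,
        ENNReal.ofReal ((((i + 1) * t / n - s) ^ α - (max (i * t / n - s) 0) ^ α) ^ 2) ∂ν :=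
        lintegral_mono_set (Ioc_zero_subset_biUnion_gridCell t n i)
    _ = ∑ j ∈ Finset.range (i + 1), ∫⁻ s in gridCell t n j,
        ENNReal.ofReal ((((i + 1) * t / n - s) ^ α - (max (i * t / n - s) 0) ^ α) ^ 2) ∂ν :=
        lintegral_biUnion_finset ((pairwise_disjoint_gridCell ht n).set_pairwise _)
          (fun j _ => measurableSet_gridCell t n j) _
    _ ≤ _ := by
        refine Finset.sum_le_sum fun j hj => ?_
        rw [← setLIntegral_const]
        exact setLIntegral_mono measurable_const fun s hs => ENNReal.ofReal_le_ofReal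
          (sq_rpow_sub_rpow_max_le_of_mem_gridCell hα0 hα1 ht
            (Nat.lt_succ_iff.1 (Finset.mem_range.1 hj)) hs)

theorem sum_lintegral_rpow_le {α β t : ℝ} (hα0 : 0 < α) (hα1 : α ≤ 1)
    (hβ : β = 2 / (1 + 2 * α)) (ht : 0 ≤ t) (ν : Measure ℝ) (n : ℕ) :
    ∑ i ∈ Finset.range n, (∫⁻ s in Ioc 0 (((i : ℝ) + 1) * t / n),
        ENNReal.ofReal ((((i + 1) * t / n - s) ^ α - (max (i * t / n - s) 0) ^ α) ^ 2) ∂ν) ^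
          (β / 2) ≤
      (∑' m, ENNReal.ofReal (powIncrement α m ^ β)) *
        ((∑ j ∈ Finset.range n, ν (gridCell t n j) ^ (β / 2)) *
          ENNReal.ofReal (t / n) ^ (1 - β / 2)) := by
  have hp0 : 0 < β / 2 := by rw [hβ]; positivity
  have hp1 : β / 2 ≤ 1 := by
    rw [hβ, div_div, div_le_one (by positivity)]; linarith
  have hαβ : α * β = 1 - β / 2 := by rw [hβ]; field_simp; ring
  have hcell : ∀ k j, (ENNReal.ofReal (((t / n) ^ α * powIncrement α k) ^ 2) *
      ν (gridCell t n j)) ^ (β / 2) = ν (gridCell t n j) ^ (β / 2) *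
        ENNReal.ofReal (t / n) ^ (1 - β / 2) * ENNReal.ofReal (powIncrement α k ^ β) := by
    intro k j
    have hc := powIncrement_nonneg hα0.le k
    rw [ENNReal.mul_rpow_of_nonneg _ _ hp0.le, ENNReal.ofReal_rpow_of_nonneg (by positivity)
      hp0.le, sq_rpow_mul_rpow_half (by positivity) hc, hαβ,
      ENNReal.ofReal_mul (by positivity),
      ENNReal.ofReal_rpow_of_nonneg (by positivity) (by linarith)]
    ring
  calc _ ≤ ∑ i ∈ Finset.range n, ∑ j ∈ Finset.range (i + 1), ν (gridCell t n j) ^ (β / 2) *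
        ENNReal.ofReal (t / n) ^ (1 - β / 2) * ENNReal.ofReal (powIncrement α (i - j) ^ β) := by
        refine Finset.sum_le_sum fun i _ => ?_
        calc _ ≤ (∑ j ∈ Finset.range (i + 1), ENNReal.ofReal (((t / n) ^ α *
              powIncrement α (i - j)) ^ 2) * ν (gridCell t n j)) ^ (β / 2) :=
              ENNReal.rpow_le_rpow (lintegral_Ioc_le_sum_gridCell hα0 hα1 ht ν n i) hp0.le
          _ ≤ _ := ENNReal.rpow_sum_le_sum_rpow _ _ hp0 hp1
          _ = _ := Finset.sum_congr rfl fun j _ => hcell _ _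
    _ ≤ _ := ENNReal.sum_range_sum_range_succ_mul_le
        (fun j => ν (gridCell t n j) ^ (β / 2) * ENNReal.ofReal (t / n) ^ (1 - β / 2))
        (fun m => ENNReal.ofReal (powIncrement α m ^ β)) n
    _ = _ := by rw [← Finset.sum_mul]; ring

theorem stmt11_general (t α β : ℝ) (ht : 0 < t) (hα : α ∈ Set.Ioo (0:ℝ) (1/4))
    (hβ : β = 2 / (1 + 2 * α))
    (ν : Measure ℝ) [IsFiniteMeasure ν]
    (hsing : ν.MutuallySingular MeasureTheory.volume) :
    Filter.Tendsto (fun n : ℕ =>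
      ∑ i ∈ Finset.range n,
        (∫⁻ s in Set.Ioc (0:ℝ) (((i:ℝ) + 1) * t / n),
          ENNReal.ofReal
            (((((i:ℝ) + 1) * t / n - s) ^ α - (max ((i:ℝ) * t / n - s) 0) ^ α) ^ 2) ∂ν)
          ^ (β / 2))
      Filter.atTop (nhds 0) := by
  obtain ⟨hα0, hα4⟩ := hα
  have hp0 : 0 < β / 2 := by rw [hβ]; positivity
  have hp1 : β / 2 < 1 := by rw [hβ, div_div, div_lt_one (by positivity)]; linarith
  have hsum : Summable fun m => powIncrement α m ^ β :=
    summable_powIncrement_rpow hα0.le (by linarith) (by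
      rw [hβ, mul_div_assoc', lt_div_iff₀ (by positivity)]; linarith)
  have hC : ∑' m, ENNReal.ofReal (powIncrement α m ^ β) ≠ ⊤ := by
    rw [← ENNReal.ofReal_tsum_of_nonneg
      (fun m => Real.rpow_nonneg (powIncrement_nonneg hα0.le m) β) hsum]
    exact ENNReal.ofReal_ne_top
  have hlim := ENNReal.Tendsto.const_mul
    (tendsto_sum_measure_gridCell_rpow_mul hsing ht hp0 hp1) (Or.inr hC)
  rw [mul_zero] at hlim
  exact tendsto_of_tendsto_of_tendsto_of_le_of_le tendsto_const_nhds hlim (fun _ => zero_le)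
    fun n => sum_lintegral_rpow_le hα0 (by linarith) hβ ht.le ν n

/-- Lemma A.3(ii) of the paper: if `ν` is a finite nonzero Borel measure on `[0,t]`
singular with respect to Lebesgue measure, `α ∈ (0,1/4)` and `β = 2/(1+2α)`, then
`∑_{i=1}^n (∫₀^{t_i^n} ((t_i^n-s)^α - (t_{i-1}^n-s)₊^α)² dν(s))^{β/2} → 0`. -/
theorem stmt11 (t α β : ℝ) (ht : 0 < t) (hα : α ∈ Set.Ioo (0:ℝ) (1/4))
    (hβ : β = 2 / (1 + 2 * α))
    (ν : Measure ℝ) [IsFiniteMeasure ν] (hν0 : ν ≠ 0)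
    (hsupp : ν (Set.Icc (0:ℝ) t)ᶜ = 0)
    (hsing : ν.MutuallySingular MeasureTheory.volume) :
    Filter.Tendsto (fun n : ℕ =>
      ∑ i ∈ Finset.range n,
        (∫⁻ s in Set.Ioc (0:ℝ) (((i:ℝ) + 1) * t / n),
          ENNReal.ofReal
            (((((i:ℝ) + 1) * t / n - s) ^ α - (max ((i:ℝ) * t / n - s) 0) ^ α) ^ 2) ∂ν)
          ^ (β / 2))
      Filter.atTop (nhds 0) :=
  stmt11_general t α β ht hα hβ ν hsing
end
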